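/- arXiv:2211.03642 — 5 statements merged into one kernel-verified Lean document; each statement's English description precedes it below -/
import Mathlib

section
/- Let n ≥ m ≥ 1 and k ≥ 1 be integers. If k is odd, then r(S(n,m); k) ≥ kn + m + 2. -/
open SimpleGraph

/-- The double star `S(n,m)`: two adjacent centers `0` and `1`, with `n` leaves
attached to `0` (vertices `2,…,n+1`) and `m` leaves attached to `1`
(vertices `n+2,…,n+m+1`). -/
def doubleStar (n m : ℕ) : SimpleGraph (Fin (n + m + 2)) :=
  SimpleGraph.fromRel (fun u v =>
    (u.val = 0 ∧ v.val = 1) ∨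
    (u.val = 0 ∧ 2 ≤ v.val ∧ v.val ≤ n + 1) ∨
    (u.val = 1 ∧ n + 2 ≤ v.val))

/-- The star `K_{1,n}` with center `0` and `n` leaves. -/
def starGraph (n : ℕ) : SimpleGraph (Fin (n + 1)) :=
  SimpleGraph.fromRel (fun u _ => u.val = 0)

/-- The subdivided star `S_n^m`, obtained from `K_{1,n}` by subdividing `m` edges each
exactly once: center `0`; subdivision vertices `1,…,m`; for `1 ≤ i ≤ m` the vertex `m+i`
is the leaf beyond subdivision vertex `i`; vertices `2m+1,…,n+m` are ordinary leaves. -/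
def subdividedStar (n m : ℕ) : SimpleGraph (Fin (n + m + 1)) :=
  SimpleGraph.fromRel (fun u v =>
    (u.val = 0 ∧ 1 ≤ v.val ∧ v.val ≤ m) ∨
    (1 ≤ u.val ∧ u.val ≤ m ∧ v.val = u.val + m) ∨
    (u.val = 0 ∧ 2 * m + 1 ≤ v.val))

/-- `K_N` colored by `c` with `k` colors contains a monochromatic copy of `H`. -/
def HasMonoCopy {W : Type} (H : SimpleGraph W) {N : ℕ} {α : Type}
    (c : Sym2 (Fin N) → α) : Prop :=
  ∃ (f : W ↪ Fin N) (i : α), ∀ v w : W, H.Adj v w → c s(f v, f w) = i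

/-- Every `k`-coloring of the edges of `K_N` contains a monochromatic copy of `H`. -/
def IsRamsey {W : Type} (H : SimpleGraph W) (k N : ℕ) : Prop :=
  ∀ c : Sym2 (Fin N) → Fin k, HasMonoCopy H c

/-- The `k`-color Ramsey number of `H`. -/
noncomputable def ramseyNumber {W : Type} (H : SimpleGraph W) (k : ℕ) : ℕ :=
  sInf {N | IsRamsey H k N}

/-- There is a list assignment of `k` colors to each edge of `K_N` such that every
coloring from the lists contains a monochromatic copy of `H`. -/
def IsListRamsey {W : Type} (H : SimpleGraph W) (k N : ℕ) : Prop :=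
  ∃ L : Sym2 (Fin N) → Finset ℕ, (∀ e, (L e).card = k) ∧
    ∀ c : Sym2 (Fin N) → ℕ, (∀ e, c e ∈ L e) → HasMonoCopy H c

/-- The `k`-color list Ramsey number of `H`. -/
noncomputable def listRamseyNumber {W : Type} (H : SimpleGraph W) (k : ℕ) : ℕ :=
  sInf {N | IsListRamsey H k N}

/-!
Lower bound. Split the `kn + m + 1` vertices into blocks `B_a` of size `n`, indexed by
`a ∈ ZMod k`, and a set `E` of `m + 1` extra vertices (the vertices `inl (a, j)` and `inr e`
below). An edge between `B_a` and `B_b` gets colour `a + b`, an edge between `B_a` and `E`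
gets colour `2a`, and edges inside `E` get colour `0`. As `k` is odd, doubling is injective on
`ZMod k`, so for each colour `i` the set `E ∪ ⋃ {B_a | 2a = i}` has at most `n + m + 1`
vertices and is closed under colour-`i` edges, while any other vertex `x ∈ B_b` has its
colour-`i` neighbours inside the single block `B_(i - b)`, i.e. at most `n` of them. The centre
of degree `n + 1` of a colour-`i` double star therefore lies in the closed set, and then so does
the whole double star, which does not fit.

Upper bound, needed because `ramseyNumber` would be the junk value `sInf ∅ = 0` if no `N`
worked. Let `d = km + n + 1` and `N = k(d + 1)`. In a `k`-colouring of `K_N` every vertex has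
at least `d` neighbours in some colour, and some colour `i` is such a majority colour for a set
`T` of at least `d + 1` vertices. Without a monochromatic double star every colour-`i`
neighbour of a vertex of `T` has at most `m` colour-`i` neighbours, and double counting the
colour-`i` edges leaving `T` gives `(d + 1) d ≤ N m = k (d + 1) m`, contradicting `d > km`.
-/

open Finset

section DoubleStar

variable {n m : ℕ}

lemma doubleStar_adj_zero {j : Fin (n + m + 2)} (h0 : j ≠ 0) (hj : j.val ≤ n + 1) :
    (doubleStar n m).Adj 0 j := by
  have hj0 : j.val ≠ 0 := Fin.val_ne_iff.mpr h0
  rw [doubleStar, fromRel_adj]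
  refine ⟨h0.symm, Or.inl ?_⟩
  rcases Nat.lt_or_ge j.val 2 with h | h
  · exact Or.inl ⟨rfl, by omega⟩
  · exact Or.inr (Or.inl ⟨rfl, h, hj⟩)

lemma doubleStar_adj_one {j : Fin (n + m + 2)} (hj : n + 2 ≤ j.val) :
    (doubleStar n m).Adj 1 j := by
  rw [doubleStar, fromRel_adj]
  refine ⟨fun h => ?_, Or.inl (Or.inr (Or.inr ⟨Fin.val_one _, hj⟩))⟩
  rw [← h, Fin.val_one] at hj
  omega

lemma doubleStar_adj_zero_or_one (x : Fin (n + m + 2)) :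
    x = 0 ∨ (doubleStar n m).Adj 0 x ∨ (doubleStar n m).Adj 1 x := by
  by_cases h0 : x = 0
  · exact Or.inl h0
  by_cases hx : x.val ≤ n + 1
  · exact Or.inr (Or.inl (doubleStar_adj_zero h0 hx))
  · exact Or.inr (Or.inr (doubleStar_adj_one (by omega)))

lemma doubleStar_adj_cases {x y : Fin (n + m + 2)} (h : (doubleStar n m).Adj x y) :
    s(x, y) = s(0, 1) ∨ (∃ j : Fin n, s(x, y) = s(0, (Fin.castAdd m j).succ.succ)) ∨
      ∃ j : Fin m, s(x, y) = s(1, (Fin.natAdd n j).succ.succ) := by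
  rw [doubleStar, fromRel_adj] at h
  simp only [Sym2.eq_iff, Fin.ext_iff, Fin.val_succ, Fin.val_castAdd, Fin.val_natAdd,
    Fin.val_one, Fin.val_zero]
  obtain ⟨-, (h | h | h) | (h | h | h)⟩ := h
  · exact Or.inl (Or.inl h)
  · exact Or.inr (Or.inl ⟨⟨y - 2, by omega⟩, Or.inl ⟨h.1, by simp only; omega⟩⟩)
  · exact Or.inr (Or.inr ⟨⟨y - (n + 2), by omega⟩, Or.inl ⟨h.1, by simp only; omega⟩⟩)
  · exact Or.inl (Or.inr h.symm)
  · exact Or.inr (Or.inl ⟨⟨x - 2, by omega⟩, Or.inr ⟨by simp only; omega, h.1⟩⟩)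
  · exact Or.inr (Or.inr ⟨⟨x - (n + 2), by omega⟩, Or.inr ⟨by simp only; omega, h.1⟩⟩)

lemma doubleStar_copy_mem_of_closed {V α : Type*} {c : Sym2 V → α} {i : α} {P : V → Prop}
    (hP : ∀ x y, P x → c s(x, y) = i → P y) {f : Fin (n + m + 2) → V}
    (hf : ∀ v w, (doubleStar n m).Adj v w → c s(f v, f w) = i) (h0 : P (f 0))
    (x : Fin (n + m + 2)) : P (f x) := by
  have h1 : P (f 1) := hP _ _ h0 (hf _ _ (doubleStar_adj_zero one_ne_zero (by simp)))
  rcases doubleStar_adj_zero_or_one x with rfl | hx | hx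
  · exact h0
  · exact hP _ _ h0 (hf _ _ hx)
  · exact hP _ _ h1 (hf _ _ hx)

end DoubleStar

theorem not_isRamsey_of_coloring {W V α : Type} [Fintype V] [Fintype α] {H : SimpleGraph W}
    {k N : ℕ} (hα : Fintype.card α = k) (hN : N ≤ Fintype.card V) (c : Sym2 V → α)
    (hc : ∀ (f : W ↪ V) (i : α), ¬ ∀ v w, H.Adj v w → c s(f v, f w) = i) :
    ¬ IsRamsey H k N := by
  intro hR
  obtain ⟨e⟩ := Function.Embedding.nonempty_of_card_le (α := Fin N) (β := V) (by simpa)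
  let φ := Fintype.equivFinOfCardEq hα
  obtain ⟨f, i, hf⟩ := hR fun p => φ (c (p.map e))
  exact hc (f.trans e) (φ.symm i) fun v w h => φ.eq_symm_apply.mpr (hf v w h)

lemma ZMod.add_self_injective {k : ℕ} (hk : Odd k) :
    Function.Injective fun x : ZMod k => x + x := by
  have h2 : IsUnit (2 : ZMod k) := by
    simpa using (ZMod.isUnit_iff_coprime 2 k).mpr hk.coprime_two_left
  intro x y h
  simp only [← two_mul] at h
  exact h2.mul_left_cancel h

section BlockColoring

variable {G : Type*} [AddCommGroup G] {n m : ℕ}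

def blockColor : (G × Fin n) ⊕ Fin (m + 1) → (G × Fin n) ⊕ Fin (m + 1) → G
  | .inl (a, _), .inl (b, _) => a + b
  | .inl (a, _), .inr _ => a + a
  | .inr _, .inl (b, _) => b + b
  | .inr _, .inr _ => 0

lemma blockColor_comm (x y : (G × Fin n) ⊕ Fin (m + 1)) :
    blockColor x y = blockColor y x := by
  rcases x with ⟨a, _⟩ | _ <;> rcases y with ⟨b, _⟩ | _ <;> simp [blockColor, add_comm]

def blockColoring : Sym2 ((G × Fin n) ⊕ Fin (m + 1)) → G :=
  Sym2.lift ⟨blockColor, blockColor_comm⟩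

def IsInBlockCore (i : G) : (G × Fin n) ⊕ Fin (m + 1) → Prop
  | .inl (a, _) => a + a = i
  | .inr _ => True

lemma IsInBlockCore.of_blockColoring_eq {i : G} {x y : (G × Fin n) ⊕ Fin (m + 1)}
    (hx : IsInBlockCore i x) (h : blockColoring s(x, y) = i) : IsInBlockCore i y := by
  rcases x with ⟨a, _⟩ | _ <;> rcases y with ⟨b, _⟩ | _ <;>
    simp only [IsInBlockCore, blockColoring, blockColor, Sym2.lift_mk] at hx h ⊢
  · rw [add_left_cancel (h.trans hx.symm), hx]
  all_goals trivial

lemma eq_inl_of_blockColoring_eq {i b : G} {j : Fin n} {y : (G × Fin n) ⊕ Fin (m + 1)}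
    (hb : b + b ≠ i) (h : blockColoring s(.inl (b, j), y) = i) :
    ∃ j', y = .inl (i - b, j') := by
  rcases y with ⟨b', j'⟩ | _ <;> simp only [blockColoring, blockColor, Sym2.lift_mk] at h
  · exact ⟨j', by rw [← h, add_sub_cancel_left]⟩
  · exact absurd h hb

lemma injOn_isInBlockCore (h2 : Function.Injective fun x : G => x + x) (i : G) :
    Set.InjOn (Sum.map Prod.snd id) {x : (G × Fin n) ⊕ Fin (m + 1) | IsInBlockCore i x} := by
  rintro (⟨a, j⟩ | e) ha (⟨a', j'⟩ | e') ha' h <;>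
    simp only [IsInBlockCore, Set.mem_ofPred_eq, Sum.map_inl, Sum.map_inr, Sum.inl.injEq,
      Sum.inr.injEq, reduceCtorEq, id] at ha ha' h ⊢
  · exact Prod.ext (h2 (ha.trans ha'.symm)) h
  · exact h

theorem not_monochromatic_doubleStar_blockColoring (h2 : Function.Injective fun x : G => x + x)
    (f : Fin (n + m + 2) ↪ (G × Fin n) ⊕ Fin (m + 1)) (i : G) :
    ¬ ∀ v w, (doubleStar n m).Adj v w → blockColoring s(f v, f w) = i := by
  intro hf
  by_cases h0 : IsInBlockCore i (f 0)
  · have hcore :=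
      doubleStar_copy_mem_of_closed (fun _ _ => IsInBlockCore.of_blockColoring_eq) hf h0
    have := Fintype.card_le_of_injective (Sum.map Prod.snd id ∘ f) fun x y h =>
      f.injective (injOn_isInBlockCore h2 i (hcore x) (hcore y) h)
    simp only [Fintype.card_fin, Fintype.card_sum] at this
    omega
  · obtain ⟨b, j, hb, hf0⟩ : ∃ b j, b + b ≠ i ∧ f 0 = .inl (b, j) := by
      rcases hf0 : f 0 with ⟨b, j⟩ | e <;> rw [hf0] at h0
      · exact ⟨b, j, h0, rfl⟩
      · exact absurd trivial h0
    let leaf (t : Fin (n + 1)) : Fin (n + m + 2) := ⟨t + 1, by omega⟩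
    have hleaf (t : Fin (n + 1)) : ∃ j', f (leaf t) = .inl (i - b, j') := by
      have hadj : (doubleStar n m).Adj 0 (leaf t) :=
        doubleStar_adj_zero (Fin.ne_of_val_ne (by simp [leaf])) (by simp [leaf]; omega)
      have := hf _ _ hadj
      rw [hf0] at this
      exact eq_inl_of_blockColoring_eq hb this
    choose g hg using hleaf
    have hg_inj : Function.Injective g := fun t t' h => by
      have := f.injective ((hg t).trans (h ▸ hg t').symm)
      simpa [leaf, Fin.ext_iff] using this
    simpa using Fintype.card_le_of_injective g hg_inj

end BlockColoring

section ColorNeighborhoods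

variable {N : ℕ} {α : Type} [DecidableEq α]

def colorNbhd (c : Sym2 (Fin N) → α) (i : α) (v : Fin N) : Finset (Fin N) :=
  {u ∈ univ.erase v | c s(v, u) = i}

lemma mem_colorNbhd {c : Sym2 (Fin N) → α} {i : α} {v u : Fin N} :
    u ∈ colorNbhd c i v ↔ u ≠ v ∧ c s(v, u) = i := by
  simp [colorNbhd]

lemma mem_colorNbhd_comm {c : Sym2 (Fin N) → α} {i : α} {v u : Fin N} :
    u ∈ colorNbhd c i v ↔ v ∈ colorNbhd c i u := by
  simp [mem_colorNbhd, Sym2.eq_swap, ne_comm]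

theorem hasMonoCopy_doubleStar_of_centers {n m : ℕ} {c : Sym2 (Fin N) → α} {i : α}
    {v u : Fin N} (hu : u ∈ colorNbhd c i v) (hv_card : n + m + 1 ≤ #(colorNbhd c i v))
    (hu_card : m + 1 ≤ #(colorNbhd c i u)) : HasMonoCopy (doubleStar n m) c := by
  have hv : v ∈ colorNbhd c i u := mem_colorNbhd_comm.mp hu
  obtain ⟨b⟩ := Function.Embedding.nonempty_of_card_le (α := Fin m)
    (β := ↥((colorNbhd c i u).erase v)) (by
      rw [Fintype.card_fin, Fintype.card_coe, card_erase_of_mem hv]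
      omega)
  let b' := b.trans (Function.Embedding.subtype _)
  obtain ⟨a⟩ := Function.Embedding.nonempty_of_card_le (α := Fin n)
    (β := ↥(colorNbhd c i v \ insert u (univ.map b'))) (by
      have := le_card_sdiff (insert u (univ.map b')) (colorNbhd c i v)
      have := card_insert_le u (univ.map b')
      rw [card_map, card_univ, Fintype.card_fin] at this
      rw [Fintype.card_fin, Fintype.card_coe]
      omega)
  let a' := a.trans (Function.Embedding.subtype _)
  have ha' (j : Fin n) : a' j ∈ colorNbhd c i v ∧ a' j ≠ u ∧ ∀ j', a' j ≠ b' j' := by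
    have := (a j).2
    simp only [mem_sdiff, mem_insert, mem_map, mem_univ, true_and, not_or, not_exists] at this
    exact ⟨this.1, this.2.1, fun j' h => this.2.2 j' h.symm⟩
  have hb' (j : Fin m) : b' j ∈ colorNbhd c i u ∧ b' j ≠ v := by
    have := (b j).2
    simp only [mem_erase] at this
    exact ⟨this.2, this.1⟩
  have hdisj : Disjoint (Set.range a') (Set.range b') :=
    Set.disjoint_range_iff.mpr fun j j' => (ha' j).2.2 j'
  have hu_notin : u ∉ Set.range (Fin.append a' b') := by
    rintro ⟨x, hx⟩
    induction x using Fin.addCases with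
    | left j => exact (ha' j).2.1 (by rwa [Fin.append_left] at hx)
    | right j => exact (mem_colorNbhd.mp (hb' j).1).1 (by rwa [Fin.append_right] at hx)
  have hv_notin : v ∉ Set.range (Fin.cons u (Fin.append a' b') : Fin (n + m + 1) → Fin N) := by
    rw [Fin.range_cons]
    rintro (h | ⟨x, hx⟩)
    · exact (mem_colorNbhd.mp hu).1 h.symm
    induction x using Fin.addCases with
    | left j => exact (mem_colorNbhd.mp (ha' j).1).1 (by rwa [Fin.append_left] at hx)
    | right j => exact (hb' j).2 (by rwa [Fin.append_right] at hx)
  let F : Fin (n + m + 2) ↪ Fin N :=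
    Fin.Embedding.cons (Fin.Embedding.cons (Fin.Embedding.append hdisj) hu_notin) hv_notin
  refine ⟨F, i, fun x y hxy => ?_⟩
  rcases doubleStar_adj_cases hxy with h | ⟨j, h⟩ | ⟨j, h⟩ <;>
    rw [← Sym2.map_mk, h, Sym2.map_mk]
  · exact (mem_colorNbhd.mp hu).2
  · change c s(v, Fin.append a' b' (Fin.castAdd m j)) = i
    rw [Fin.append_left]
    exact (mem_colorNbhd.mp (ha' j).1).2
  · change c s(u, Fin.append a' b' (Fin.natAdd n j)) = i
    rw [Fin.append_right]
    exact (mem_colorNbhd.mp (hb' j).1).2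

lemma exists_le_card_colorNbhd {k d : ℕ} [NeZero k] (c : Sym2 (Fin N) → Fin k)
    (h : k * d < N) (v : Fin N) : ∃ i, d ≤ #(colorNbhd c i v) := by
  obtain ⟨i, -, hi⟩ := exists_le_card_fiber_of_mul_le_card_of_maps_to
    (s := univ.erase v) (t := univ) (f := fun u => c s(v, u)) (n := d) (fun _ _ => mem_univ _)
    univ_nonempty (by simp; omega)
  exact ⟨i, hi⟩

lemma card_mul_le_of_colorNbhd_sparse {c : Sym2 (Fin N) → α} {i : α} {T : Finset (Fin N)}
    {d m : ℕ} (hT : ∀ v ∈ T, d ≤ #(colorNbhd c i v))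
    (hsparse : ∀ v ∈ T, ∀ u ∈ colorNbhd c i v, #(colorNbhd c i u) ≤ m) :
    #T * d ≤ N * m := by
  have := card_mul_le_card_mul (fun v u => u ∈ colorNbhd c i v) (s := T) (t := univ)
    (m := d) (n := m) (fun v hv => by simpa [bipartiteAbove] using hT v hv) (fun u _ => ?_)
  · simpa using this
  by_cases h : ∃ v ∈ T, u ∈ colorNbhd c i v
  · obtain ⟨v, hv, hu⟩ := h
    refine (card_le_card fun w hw => ?_).trans (hsparse v hv u hu)
    exact mem_colorNbhd_comm.mp ((mem_bipartiteBelow _).mp hw).2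
  · push Not at h
    simp [bipartiteBelow, filter_false_of_mem h]

end ColorNeighborhoods

theorem isRamsey_doubleStar (n m : ℕ) {k : ℕ} [NeZero k] :
    IsRamsey (doubleStar n m) k (k * (k * m + n + 2)) := by
  intro c
  by_contra hc
  have hk := NeZero.pos k
  choose col hcol using exists_le_card_colorNbhd (d := k * m + n + 1) c (by nlinarith)
  obtain ⟨i, hT⟩ := Fintype.exists_le_card_fiber_of_mul_le_card (f := col)
    (n := k * m + n + 2) (by simp)
  set T : Finset _ := {v | col v = i}
  have hT_deg : ∀ v ∈ T, k * m + n + 1 ≤ #(colorNbhd c i v) :=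
    fun v hv => (mem_filter.mp hv).2 ▸ hcol v
  have hsparse : ∀ v ∈ T, ∀ u ∈ colorNbhd c i v, #(colorNbhd c i u) ≤ m := by
    intro v hv u hu
    by_contra h
    have := Nat.le_mul_of_pos_left m hk
    exact hc (hasMonoCopy_doubleStar_of_centers hu (by linarith [hT_deg v hv]) (by omega))
  have hcount := card_mul_le_of_colorNbhd_sparse hT_deg hsparse
  nlinarith [Nat.mul_le_mul_right (k * m + n + 1) hT]

theorem stmt_3_general (n m k : ℕ) (hodd : Odd k) :
    ramseyNumber (doubleStar n m) k ≥ k * n + m + 2 := by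
  have : NeZero k := ⟨hodd.pos.ne'⟩
  refine le_csInf ⟨_, isRamsey_doubleStar n m⟩ fun N hN => ?_
  by_contra hlt
  refine not_isRamsey_of_coloring (ZMod.card k) ?_ blockColoring
    (not_monochromatic_doubleStar_blockColoring (ZMod.add_self_injective hodd)) hN
  simp only [Fintype.card_sum, Fintype.card_prod, ZMod.card, Fintype.card_fin]
  omega

/-- If `n ≥ m ≥ 1`, `k ≥ 1` and `k` is odd, then `r(S(n,m); k) ≥ kn + m + 2`. -/
theorem stmt_3 (n m k : ℕ) (hnm : m ≤ n) (hm : 1 ≤ m) (hk : 1 ≤ k) (hodd : Odd k) :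
    ramseyNumber (doubleStar n m) k ≥ k * n + m + 2 :=
  stmt_3_general n m k hodd
end

section
/- Let n ≥ m ≥ 1 and k ≥ 2 be integers such that n is even, m is odd, and k − 1 is divisible by (n+m+1)/2. Then r(S(n,m); k) ≥ kn + m + 2. -/
open SimpleGraph

/-!
Write `n = 2h`, `n + m + 1 = 2s`, `k - 1 = as` and `q = ah + 1`, so that
`kn + m + 1 = q(n + m + 1) = 2qs`. Colour the edge `{x, y}` of the complete graph on `ℤ/2qs`
by the circular distance `δ = |x - y| ≤ qs`. Distances divisible by `q` get colour `k - 1`;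
the edges of that colour stay inside the cosets of `qℤ/2qs`, which have `n + m + 1` elements,
too few for the connected graph `S(n,m)`. The `(q - 1)s = (k - 1)h` distances not divisible
by `q` are cut, in increasing order, into `k - 1` blocks of `h`. A distance is realised by at
most two differences `±d`, so every other colour class has maximum degree at most `2h = n`,
while a centre of `S(n,m)` has degree `n + 1`.

As `ramseyNumber` is an `sInf`, which is `0` on the empty set, some `N` with the Ramsey
property is needed as well. In a
`k`-colouring of `K_N` with `N = 2k(n + m) + 2` some colour has more than `(n + m)N` edges,
hence an edge whose two ends both have degree more than `n + m` in that colour, and `S(n,m)`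
grows greedily from that edge.
-/

open Finset

namespace SimpleGraph

variable {V W α : Type} {H : SimpleGraph W}

def colorClass (c : Sym2 V → α) (i : α) : SimpleGraph V := fromEdgeSet {e | c e = i}

@[simp]
lemma colorClass_adj {c : Sym2 V → α} {i : α} {x y : V} :
    (colorClass c i).Adj x y ↔ c s(x, y) = i ∧ x ≠ y := fromEdgeSet_adj _

lemma isContained_colorClass_of_embedding {c : Sym2 V → α} {i : α} (f : W ↪ V)
    (hf : ∀ v w, H.Adj v w → c s(f v, f w) = i) : H ⊑ colorClass c i :=
  ⟨⟨⟨f, fun {v w} h => colorClass_adj.2 ⟨hf v w h, f.injective.ne h.ne⟩⟩, f.injective⟩⟩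

end SimpleGraph

section Ramsey

variable {V W : Type} {H : SimpleGraph W} {k : ℕ}

lemma hasMonoCopy_of_isContained_colorClass {α : Type} {N : ℕ} {c : Sym2 (Fin N) → α}
    {i : α} (h : H ⊑ colorClass c i) : HasMonoCopy H c := by
  obtain ⟨f⟩ := h
  exact ⟨f.toEmbedding, i, fun v w hvw => (colorClass_adj.1 (f.toHom.map_adj hvw)).1⟩

lemma IsRamsey.mono {N N' : ℕ} (h : IsRamsey H k N) (hN : N ≤ N') : IsRamsey H k N' := by
  intro c
  obtain ⟨f, i, hf⟩ := h (fun e => c (e.map (Fin.castLE hN)))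
  exact ⟨f.trans (Fin.castLEEmb hN), i, fun v w hvw => by simpa using hf v w hvw⟩

lemma le_ramseyNumber {M : ℕ} (hR : ∃ N, IsRamsey H k N) (hM : ¬ IsRamsey H k M) :
    M + 1 ≤ ramseyNumber H k :=
  le_csInf hR fun N hN => by
    by_contra! h
    exact hM (hN.mono (Nat.le_of_lt_succ h))

lemma not_isRamsey_of_forall_free [Fintype V] (c : Sym2 V → ℕ) (hc : ∀ e, c e < k)
    (hfree : ∀ i, H.Free (colorClass c i)) : ¬ IsRamsey H k (Fintype.card V) := by
  intro hR
  let e := (Fintype.equivFin V).symm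
  obtain ⟨f, i, hf⟩ := hR fun x => ⟨c (x.map e), hc _⟩
  exact hfree i <| isContained_colorClass_of_embedding (f.trans e.toEmbedding)
    fun v w hvw => by simpa using congrArg Fin.val (hf v w hvw)

end Ramsey

namespace SimpleGraph

variable {V W β : Type} {G : SimpleGraph V} {H : SimpleGraph W}

lemma exists_adj_lt_degree [Fintype V] [DecidableEq V] [DecidableRel G.Adj] (L : ℕ)
    (h : L * Fintype.card V < #G.edgeFinset) :
    ∃ u v, G.Adj u v ∧ L < G.degree u ∧ L < G.degree v := by
  set low := ({v | G.degree v ≤ L} : Finset V)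
  have hcard : #(low.biUnion fun v => G.incidenceFinset v) < #G.edgeFinset := calc
    _ ≤ ∑ v ∈ low, G.degree v := card_biUnion_le.trans_eq <| by
          simp only [card_incidenceFinset_eq_degree]
    _ ≤ L * Fintype.card V := (sum_le_card_nsmul _ _ _ fun v hv => (mem_filter.1 hv).2).trans
          (by rw [smul_eq_mul, mul_comm]; gcongr; exact card_le_univ _)
    _ < _ := h
  obtain ⟨e, he, hlow⟩ := exists_mem_notMem_of_card_lt_card hcard
  induction e using Sym2.ind with
  | _ u v =>
  have hhigh : ∀ x ∈ s(u, v), L < G.degree x := fun x hx => by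
    by_contra! hx'
    exact hlow <| mem_biUnion.2 ⟨x, by simpa [low] using hx',
      (mem_incidenceFinset _ _ _).2 ⟨mem_edgeFinset.1 he, hx⟩⟩
  exact ⟨u, v, mem_edgeFinset.1 he, hhigh u (Sym2.mem_mk_left u v),
    hhigh v (Sym2.mem_mk_right u v)⟩

lemma Connected.card_le_of_isContained [Fintype V] [Fintype W] [DecidableEq β]
    (hH : H.Connected) (hHG : H ⊑ G) (φ : V → β) (hφ : ∀ x y, G.Adj x y → φ x = φ y)
    {M : ℕ} (hM : ∀ b, #{x | φ x = b} ≤ M) : Fintype.card W ≤ M := by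
  obtain ⟨f⟩ := hHG
  obtain ⟨w₀⟩ := hH.nonempty
  have hreach : ∀ x y, G.Reachable x y → φ x = φ y := by
    rintro x y ⟨p⟩
    induction p with
    | nil => rfl
    | cons h _ ih => exact (hφ _ _ h).trans ih
  calc Fintype.card W = #(univ.map f.toEmbedding) := by simp
    _ ≤ #{x | φ x = φ (f w₀)} := card_le_card fun x hx => by
          obtain ⟨w, -, rfl⟩ := mem_map.1 hx
          exact mem_filter.2 ⟨mem_univ _, hreach _ _ ((hH.preconnected w w₀).map f.toHom)⟩
    _ ≤ M := hM _

end SimpleGraph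

section DoubleStar

variable {V : Type} {G : SimpleGraph V} {n m : ℕ}

lemma doubleStar_adj_zero_s6 {b : Fin (n + m + 2)} (hb1 : 1 ≤ b.val) (hbn : b.val ≤ n + 1) :
    (doubleStar n m).Adj 0 b := by
  simp only [doubleStar, fromRel_adj, ne_eq, Fin.ext_iff, Fin.val_zero, true_and]
  omega

lemma doubleStar_adj_one_s6 {b : Fin (n + m + 2)} (hb : n + 2 ≤ b.val) :
    (doubleStar n m).Adj 1 b := by
  simp only [doubleStar, fromRel_adj, ne_eq, Fin.ext_iff, Fin.val_one, true_and]
  omega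

lemma doubleStar_connected : (doubleStar n m).Connected := by
  have h0 : ∀ b : Fin (n + m + 2), (doubleStar n m).Reachable 0 b := fun b => by
    rcases (show b.val = 0 ∨ 1 ≤ b.val ∧ b.val ≤ n + 1 ∨ n + 2 ≤ b.val by omega) with
      hb | ⟨hb1, hbn⟩ | hb
    · rw [show b = 0 from Fin.ext hb]
    · exact (doubleStar_adj_zero_s6 hb1 hbn).reachable
    · exact (doubleStar_adj_zero_s6 (b := 1) le_rfl (by simp)).reachable.trans
        (doubleStar_adj_one_s6 hb).reachable
  exact (connected_iff _).2 ⟨fun a b => (h0 a).symm.trans (h0 b), ⟨0⟩⟩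

lemma le_degree_doubleStar_zero [Fintype ((doubleStar n m).neighborSet 0)] :
    n + 1 ≤ (doubleStar n m).degree 0 := by
  rw [← card_neighborFinset_eq_degree]
  calc n + 1 = #(univ : Finset (Fin (n + 1))) := by simp
    _ ≤ _ := card_le_card_of_injOn (fun j => (⟨j.val + 1, by omega⟩ : Fin (n + m + 2)))
          (fun j _ => (mem_neighborFinset _ _ _).2 (doubleStar_adj_zero_s6 (by simp) (by simp; omega)))
          (fun a _ b _ h => by simpa [Fin.ext_iff] using h)

lemma doubleStar_le {G : SimpleGraph (Fin (n + m + 2))}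
    (h0 : ∀ b : Fin (n + m + 2), 1 ≤ b.val → b.val ≤ n + 1 → G.Adj 0 b)
    (h1 : ∀ b : Fin (n + m + 2), n + 2 ≤ b.val → G.Adj 1 b) : doubleStar n m ≤ G := by
  have key : ∀ a b : Fin (n + m + 2), (a.val = 0 ∧ b.val = 1 ∨
      a.val = 0 ∧ 2 ≤ b.val ∧ b.val ≤ n + 1 ∨ a.val = 1 ∧ n + 2 ≤ b.val) → G.Adj a b := by
    rintro a b (⟨ha, hb⟩ | ⟨ha, hb, hbn⟩ | ⟨ha, hb⟩)
    · obtain rfl : a = 0 := Fin.ext ha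
      exact h0 b (by omega) (by omega)
    · obtain rfl : a = 0 := Fin.ext ha
      exact h0 b (by omega) hbn
    · obtain rfl : a = 1 := Fin.ext ha
      exact h1 b hb
  intro a b hab
  obtain ⟨-, h | h⟩ := (fromRel_adj ..).1 hab
  exacts [key a b h, (key b a h).symm]

lemma doubleStar_isContained {u v : V} {S T : Finset V} (huv : G.Adj u v) (hS : #S = n)
    (hT : #T = m) (hSu : ∀ x ∈ S, G.Adj u x) (hTv : ∀ x ∈ T, G.Adj v x) (hvS : v ∉ S)
    (huT : u ∉ T) (hST : Disjoint S T) : doubleStar n m ⊑ G := by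
  let eS : Fin n → V := fun i => (S.equivFinOfCardEq hS).symm i
  let eT : Fin m → V := fun i => (T.equivFinOfCardEq hT).symm i
  have heS : ∀ i, eS i ∈ S := fun i => ((S.equivFinOfCardEq hS).symm i).2
  have heT : ∀ i, eT i ∈ T := fun i => ((T.equivFinOfCardEq hT).symm i).2
  have heST : ∀ i, Fin.append eS eT i ∈ S ∨ Fin.append eS eT i ∈ T :=
    Fin.addCases (by simp [heS]) (by simp [heT])
  let f : Fin (n + m + 2) → V := Fin.cons u (Fin.cons v (Fin.append eS eT))
  have hf : f.Injective := by
    refine Fin.cons_injective_iff.2 ⟨?_, Fin.cons_injective_iff.2 ⟨?_, ?_⟩⟩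
    · simp only [Fin.range_cons, Set.mem_insert_iff, Set.mem_range, not_or]
      refine ⟨huv.ne, fun ⟨i, hi⟩ => (heST i).elim ?_ ?_⟩ <;> rw [hi]
      exacts [fun h => G.irrefl (hSu u h), huT]
    · rintro ⟨i, hi⟩
      refine (heST i).elim ?_ ?_ <;> rw [hi]
      exacts [hvS, fun h => G.irrefl (hTv v h)]
    · exact Fin.append_injective_iff.2 ⟨fun i j h => (S.equivFinOfCardEq hS).symm.injective
        (Subtype.ext h), fun i j h => (T.equivFinOfCardEq hT).symm.injective (Subtype.ext h),
        fun i j h => Finset.disjoint_left.1 hST (heS i) (h ▸ heT j)⟩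
  refine isContained_iff_exists_le_comap.2 ⟨⟨f, hf⟩, doubleStar_le (fun b hb1 hbn => ?_)
    fun b hb => ?_⟩
  · rcases (show b.val = 1 ∨ 2 ≤ b.val by omega) with hb | hb
    · obtain rfl : b = 1 := Fin.ext hb
      exact huv
    rw [show b = (Fin.castAdd m ⟨b.val - 2, by omega⟩).succ.succ from Fin.ext (by simp; omega)]
    refine hSu _ ?_
    simpa only [f, Function.Embedding.coeFn_mk, Fin.cons_succ, Fin.append_left] using heS _
  · rw [show b = (Fin.natAdd n ⟨b.val - n - 2, by omega⟩).succ.succ from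
      Fin.ext (by simp; omega)]
    refine hTv _ ?_
    simpa only [f, Function.Embedding.coeFn_mk, Fin.cons_succ, Fin.append_right] using heT _

lemma doubleStar_isContained_of_le_degree [Fintype V] [DecidableEq V] [DecidableRel G.Adj]
    {u v : V} (huv : G.Adj u v) (hu : n + 1 ≤ G.degree u) (hv : n + m + 1 ≤ G.degree v) :
    doubleStar n m ⊑ G := by
  obtain ⟨S, hSu, hS⟩ := exists_subset_card_eq (n := n) (s := (G.neighborFinset u).erase v) <| by
    rw [card_erase_of_mem (G.mem_neighborFinset u v |>.2 huv), card_neighborFinset_eq_degree]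
    omega
  obtain ⟨T, hTv, hT⟩ := exists_subset_card_eq (n := m)
      (s := (G.neighborFinset v).erase u \ S) <| by
    refine le_trans ?_ (le_card_sdiff _ _)
    rw [card_erase_of_mem (G.mem_neighborFinset v u |>.2 huv.symm),
      card_neighborFinset_eq_degree, hS]
    omega
  simp only [subset_iff, mem_sdiff, mem_erase, mem_neighborFinset] at hSu hTv
  exact doubleStar_isContained huv hS hT (fun x hx => (hSu hx).2) (fun x hx => (hTv hx).1.2)
    (fun h => (hSu h).1 rfl) (fun h => (hTv h).1.1 rfl)
    (Finset.disjoint_left.2 fun x hxS hxT => (hTv hxT).2 hxS)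

end DoubleStar

lemma exists_isRamsey_doubleStar (n m k : ℕ) : ∃ N, IsRamsey (doubleStar n m) k N := by
  classical
  refine ⟨2 * (k * (n + m)) + 2, fun c => ?_⟩
  have hedges : k * (n + m) * (2 * (k * (n + m)) + 2) <
      #(⊤ : SimpleGraph (Fin (2 * (k * (n + m)) + 2))).edgeFinset := by
    rw [card_edgeFinset_top_eq_card_choose_two, Fintype.card_fin, Nat.choose_two_right]
    generalize k * (n + m) = x
    rw [show 2 * x + 2 - 1 = 2 * x + 1 by omega,
      show (2 * x + 2) * (2 * x + 1) = 2 * ((x + 1) * (2 * x + 1)) by ring,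
      Nat.mul_div_cancel_left _ two_pos]
    nlinarith
  obtain ⟨i, -, hi⟩ := exists_lt_card_fiber_of_mul_lt_card_of_maps_to (f := c) (t := univ)
    (fun _ _ => mem_univ _) (by rwa [card_univ, Fintype.card_fin, ← mul_assoc])
  have hsub : {e ∈ (⊤ : SimpleGraph (Fin (2 * (k * (n + m)) + 2))).edgeFinset | c e = i} ⊆
      (colorClass c i).edgeFinset := by
    intro e he
    induction e using Sym2.ind with
    | _ y z => simp_all
  obtain ⟨u, v, huv, hu, hv⟩ := exists_adj_lt_degree (G := colorClass c i) (n + m) <| by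
    grw [← hsub, Fintype.card_fin]
    exact hi
  exact hasMonoCopy_of_isContained_colorClass
    (doubleStar_isContained_of_le_degree huv (by omega) (by omega))

section Cayley

variable {Γ α : Type} [AddGroup Γ]

def cayleyColoring (χ : Γ → α) (hχ : ∀ d, χ (-d) = χ d) : Sym2 Γ → α :=
  Sym2.lift ⟨fun x y => χ (x - y), fun x y => by dsimp only; rw [← hχ, neg_sub]⟩

variable {χ : Γ → α} {hχ : ∀ d, χ (-d) = χ d}

@[simp]
lemma cayleyColoring_mk (x y : Γ) : cayleyColoring χ hχ s(x, y) = χ (x - y) := rfl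

lemma degree_colorClass_cayleyColoring_le [Fintype Γ] [DecidableEq Γ] [DecidableEq α] (i : α)
    (x : Γ) [Fintype ((colorClass (cayleyColoring χ hχ) i).neighborSet x)] :
    (colorClass (cayleyColoring χ hχ) i).degree x ≤ #{d | χ d = i} := by
  rw [← card_neighborFinset_eq_degree]
  refine (card_le_card fun y hy => ?_).trans (card_image_le (f := (-· + x)))
  rw [mem_neighborFinset, colorClass_adj, cayleyColoring_mk] at hy
  exact mem_image.2 ⟨x - y, by simpa using hy.1, by rw [neg_sub, sub_add_cancel]⟩

end Cayley

lemma AddMonoidHom.card_fiber_mul_card_of_surjective {Γ Γ' : Type} [AddGroup Γ] [Fintype Γ]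
    [AddGroup Γ'] [Fintype Γ'] [DecidableEq Γ'] (f : Γ →+ Γ') (hf : Function.Surjective f)
    (y : Γ') : #{x | f x = y} * Fintype.card Γ' = Fintype.card Γ := by
  calc #{x | f x = y} * Fintype.card Γ' = ∑ y' : Γ', #{x | f x = y'} := by
        rw [sum_congr rfl fun y' _ => AddMonoidHom.card_fiber_eq_of_mem_range f (hf y') (hf y),
          sum_const, card_univ, smul_eq_mul, mul_comm]
    _ = Fintype.card Γ := (card_eq_sum_card_fiberwise fun _ _ => mem_univ _).symm

lemma card_filter_div_eq_le (K h i : ℕ) : #{r ∈ range (K * h) | r / h = i} ≤ h := by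
  rcases h.eq_zero_or_pos with rfl | hh
  · simp
  calc #{r ∈ range (K * h) | r / h = i} ≤ #(Ico (i * h) (i * h + h)) :=
        card_le_card fun r hr => by
          simp only [mem_filter, Nat.div_eq_iff hh] at hr
          simp only [mem_Ico]
          omega
    _ = h := by simp

namespace Nat

lemma count_not_dvd_mul (q s : ℕ) : count (fun a => ¬ q ∣ a) (q * s) = (q - 1) * s := by
  have hblock : count (fun a => ¬ q ∣ a) q = q - 1 := by
    rcases q with _ | q
    · simp
    rw [count_succ', count_of_forall fun a ha => not_dvd_of_pos_of_lt a.succ_pos (by omega)]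
    simp
  induction s with
  | zero => simp
  | succ s ih =>
    rw [mul_add_one, count_add, ih]
    simp only [Nat.dvd_add_right (dvd_mul_right q s), hblock]
    ring

lemma count_not_dvd_lt_of_le_mul {q s a : ℕ} (ha : a ≤ q * s) (hqa : ¬ q ∣ a) :
    count (fun b => ¬ q ∣ b) a < (q - 1) * s :=
  count_not_dvd_mul q s ▸ count_strict_mono hqa (ha.lt_of_ne fun h => hqa (h ▸ dvd_mul_right q s))

end Nat

/-- `Nat.count (¬ q ∣ ·) a` is the rank of `a` among the non-multiples of `q`. -/
def distColor (q h K a : ℕ) : ℕ :=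
  if q ∣ a then K else Nat.count (fun b => ¬ q ∣ b) a / h

lemma distColor_lt_of_not_dvd {q h K s a : ℕ} (hKh : (q - 1) * s = K * h) (ha : a ≤ q * s)
    (hqa : ¬ q ∣ a) : distColor q h K a < K := by
  rw [distColor, if_neg hqa]
  exact Nat.div_lt_of_lt_mul (mul_comm K h ▸ hKh ▸ Nat.count_not_dvd_lt_of_le_mul ha hqa)

lemma card_filter_distColor_eq_le {q h K s i : ℕ} (hKh : (q - 1) * s = K * h) (hi : i ≠ K) :
    #{a ∈ range (q * s + 1) | distColor q h K a = i} ≤ h := by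
  have hnd : ∀ a ∈ ({a ∈ range (q * s + 1) | distColor q h K a = i} : Finset ℕ), ¬ q ∣ a :=
    fun a ha hqa => hi <| by rw [← (mem_filter.1 ha).2, distColor, if_pos hqa]
  refine le_trans (card_le_card_of_injOn (Nat.count fun b => ¬ q ∣ b) (fun a ha => ?_)
    fun a ha b hb hab => Nat.count_injective (hnd a ha) (hnd b hb) hab)
    (card_filter_div_eq_le K h i)
  have ha' := mem_filter.1 ha
  rw [distColor, if_neg (hnd a ha)] at ha'
  exact mem_filter.2 ⟨mem_range.2 (hKh ▸ Nat.count_not_dvd_lt_of_le_mul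
    (by simpa [Nat.lt_succ_iff] using ha'.1) (hnd a ha)), ha'.2⟩

namespace ZMod

variable {N : ℕ}

lemma card_filter_natAbs_valMinAbs_le [NeZero N] (p : ℕ → Prop) [DecidablePred p] :
    #{d : ZMod N | p d.valMinAbs.natAbs} ≤ 2 * #{a ∈ range (N / 2 + 1) | p a} := by
  refine (card_le_mul_card_image (f := fun d : ZMod N => d.valMinAbs.natAbs) _ 2
    fun b hb => ?_).trans (Nat.mul_le_mul_left 2 (card_le_card fun a ha => ?_))
  · obtain ⟨d, -, rfl⟩ := mem_image.1 hb
    refine (card_le_card fun e he => ?_).trans (card_le_two (a := d) (b := -d))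
    simpa using (natAbs_valMinAbs_eq_natAbs_valMinAbs ..).1 (mem_filter.1 he).2
  · obtain ⟨d, hd, rfl⟩ := mem_image.1 ha
    exact mem_filter.2 ⟨mem_range.2 (Nat.lt_succ_of_le (natAbs_valMinAbs_le d)),
      (mem_filter.1 hd).2⟩

lemma castHom_eq_zero_of_dvd_natAbs_valMinAbs {q : ℕ} (hqN : q ∣ N) {d : ZMod N}
    (hd : q ∣ d.valMinAbs.natAbs) : castHom hqN (ZMod q) d = 0 := by
  rw [← coe_valMinAbs d, map_intCast, intCast_zmod_eq_zero_iff_dvd, Int.natCast_dvd]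
  exact hd

end ZMod

theorem not_isRamsey_doubleStar {n m k h s q : ℕ} [NeZero q] (hn : n = 2 * h)
    (hs : n + m + 1 = 2 * s) (hKh : (q - 1) * s = (k - 1) * h) (hk : 1 ≤ k) :
    ¬ IsRamsey (doubleStar n m) k (q * (n + m + 1)) := by
  classical
  have hN2 : q * (n + m + 1) / 2 = q * s := by
    rw [hs, mul_left_comm, Nat.mul_div_cancel_left _ two_pos]
  let χ : ZMod (q * (n + m + 1)) → ℕ := fun d => distColor q h (k - 1) d.valMinAbs.natAbs
  have hχ : ∀ d, χ (-d) = χ d := fun d => by simp [χ]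
  have hsmall : ∀ d, ¬ q ∣ d.valMinAbs.natAbs → χ d < k - 1 := fun d hd =>
    distColor_lt_of_not_dvd hKh (hN2 ▸ ZMod.natAbs_valMinAbs_le d) hd
  have hle : ∀ d, χ d ≤ k - 1 := fun d => by
    by_cases hd : q ∣ d.valMinAbs.natAbs
    · simp [χ, distColor, hd]
    · exact (hsmall d hd).le
  have hlt : ∀ e, cayleyColoring χ hχ e < k := fun e => by
    induction e using Sym2.ind with
    | _ x y => have := hle (x - y); simp only [cayleyColoring_mk]; omega
  refine ZMod.card (q * (n + m + 1)) ▸ not_isRamsey_of_forall_free _ hlt fun i => ?_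
  rcases eq_or_ne i (k - 1) with rfl | hi
  · intro hcopy
    let φ := (ZMod.castHom (dvd_mul_right q (n + m + 1)) (ZMod q)).toAddMonoidHom
    have hφ : ∀ x y, (colorClass (cayleyColoring χ hχ) (k - 1)).Adj x y → φ x = φ y := by
      intro x y hxy
      have hd : q ∣ (x - y).valMinAbs.natAbs := by
        by_contra hd
        exact (hsmall _ hd).ne (by simpa using hxy.1)
      rw [← sub_eq_zero, ← map_sub]
      exact ZMod.castHom_eq_zero_of_dvd_natAbs_valMinAbs (dvd_mul_right q _) hd
    have hfiber : ∀ b, #{x | φ x = b} ≤ n + m + 1 := fun b => by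
      have := φ.card_fiber_mul_card_of_surjective
        (ZMod.castHom_surjective (dvd_mul_right q _)) b
      rw [ZMod.card, ZMod.card] at this
      exact (Nat.eq_of_mul_eq_mul_left (Nat.pos_of_neZero q) ((mul_comm _ _).trans this)).le
    have := doubleStar_connected.card_le_of_isContained hcopy φ hφ hfiber
    simp at this
  · rintro ⟨f⟩
    have h1 := f.degree_le 0
    have h2 := degree_colorClass_cayleyColoring_le (hχ := hχ) i (f 0)
    have h3 : #{d | χ d = i} ≤ 2 * #{a ∈ range (q * (n + m + 1) / 2 + 1) | _} :=
      ZMod.card_filter_natAbs_valMinAbs_le fun a => distColor q h (k - 1) a = i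
    have h4 := card_filter_distColor_eq_le hKh hi
    have h5 := le_degree_doubleStar_zero (n := n) (m := m)
    rw [hN2] at h3
    omega

theorem stmt_6_general (n m k : ℕ) (hk : 2 ≤ k)
    (hne : Even n) (hmo : Odd m) (hdvd : (n + m + 1) / 2 ∣ (k - 1)) :
    ramseyNumber (doubleStar n m) k ≥ k * n + m + 2 := by
  obtain ⟨h, rfl⟩ := hne
  obtain ⟨c, rfl⟩ := hmo
  obtain ⟨a, ha⟩ := hdvd
  rw [show (h + h + (2 * c + 1) + 1) / 2 = h + c + 1 by omega] at ha
  obtain ⟨k, rfl⟩ : ∃ k', k = k' + 1 := ⟨k - 1, by omega⟩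
  rw [Nat.add_sub_cancel] at ha
  subst ha
  have hlow := not_isRamsey_doubleStar (n := h + h) (m := 2 * c + 1) (k := (h + c + 1) * a + 1)
    (h := h) (s := h + c + 1) (q := a * h + 1) (two_mul h).symm (by ring)
    (by simp only [Nat.add_sub_cancel]; ring) le_add_self
  rw [show (a * h + 1) * (h + h + (2 * c + 1) + 1) =
    ((h + c + 1) * a + 1) * (h + h) + (2 * c + 1) + 1 by ring] at hlow
  exact le_ramseyNumber (exists_isRamsey_doubleStar _ _ _) hlow

/-- If `n ≥ m ≥ 1`, `k ≥ 2`, `n` is even, `m` is odd, and `(n+m+1)/2`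
divides `k − 1`, then `r(S(n,m); k) ≥ kn + m + 2`. -/
theorem stmt_6 (n m k : ℕ) (hnm : m ≤ n) (hm : 1 ≤ m) (hk : 2 ≤ k)
    (hne : Even n) (hmo : Odd m) (hdvd : (n + m + 1) / 2 ∣ (k - 1)) :
    ramseyNumber (doubleStar n m) k ≥ k * n + m + 2 :=
  stmt_6_general n m k hk hne hmo hdvd
end

section
/- Let k ≥ 2 and n ≥ m ≥ 1 be integers. If (n+1)·⌈(n+1)/(k−1)⌉ > m((k−1)n + m), then r(S(n,m); k) ≤ kn + m + 2. -/
open SimpleGraph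

def dsMap (n m : ℕ) {N : ℕ} (a w : Fin N) (xf : Fin n → Fin N) (yf : Fin m → Fin N) :
    Fin (n + m + 2) → Fin N := fun v =>
  if h0 : v.val = 0 then a
  else if h1 : v.val = 1 then w
  else if h2 : v.val < n + 2 then xf ⟨v.val - 2, by omega⟩
  else yf ⟨v.val - (n + 2), by have := v.isLt; omega⟩

lemma dsMap_zero {n m N : ℕ} (a w : Fin N) (xf : Fin n → Fin N) (yf : Fin m → Fin N)
    {v : Fin (n + m + 2)} (h : v.val = 0) : dsMap n m a w xf yf v = a := by
  unfold dsMap; rw [dif_pos h]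

lemma dsMap_one {n m N : ℕ} (a w : Fin N) (xf : Fin n → Fin N) (yf : Fin m → Fin N)
    {v : Fin (n + m + 2)} (h : v.val = 1) : dsMap n m a w xf yf v = w := by
  unfold dsMap; rw [dif_neg (by omega), dif_pos h]

lemma dsMap_x {n m N : ℕ} (a w : Fin N) (xf : Fin n → Fin N) (yf : Fin m → Fin N)
    {v : Fin (n + m + 2)} (h : 2 ≤ v.val) (h' : v.val < n + 2) :
    dsMap n m a w xf yf v = xf ⟨v.val - 2, by omega⟩ := by
  unfold dsMap; rw [dif_neg (by omega), dif_neg (by omega), dif_pos h']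

lemma dsMap_y {n m N : ℕ} (a w : Fin N) (xf : Fin n → Fin N) (yf : Fin m → Fin N)
    {v : Fin (n + m + 2)} (h : n + 2 ≤ v.val) :
    dsMap n m a w xf yf v = yf ⟨v.val - (n + 2), by have := v.isLt; omega⟩ := by
  unfold dsMap; rw [dif_neg (by omega), dif_neg (by omega), dif_neg (by omega)]

lemma embed_ds {n m N : ℕ} {α : Type} (c : Sym2 (Fin N) → α) (j : α) (a w : Fin N)
    (haw : a ≠ w) (hc : c s(a, w) = j) (X Y : Finset (Fin N))
    (hX : X.card = n) (hY : Y.card = m) (hXY : Disjoint X Y)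
    (haX : a ∉ X) (hwX : w ∉ X) (haY : a ∉ Y) (hwY : w ∉ Y)
    (hXc : ∀ x ∈ X, c s(a, x) = j) (hYc : ∀ y ∈ Y, c s(w, y) = j) :
    HasMonoCopy (doubleStar n m) c := by
  classical
  set xf : Fin n → Fin N := fun i => (X.orderIsoOfFin hX i : Fin N) with hxf
  set yf : Fin m → Fin N := fun i => (Y.orderIsoOfFin hY i : Fin N) with hyf
  have hxfX : ∀ i, xf i ∈ X := fun i => (X.orderIsoOfFin hX i).2
  have hyfY : ∀ i, yf i ∈ Y := fun i => (Y.orderIsoOfFin hY i).2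
  have hxf_inj : Function.Injective xf := fun i i' h => by
    simpa using (X.orderIsoOfFin hX).injective (Subtype.ext h)
  have hyf_inj : Function.Injective yf := fun i i' h => by
    simpa using (Y.orderIsoOfFin hY).injective (Subtype.ext h)
  have hxy : ∀ i i', xf i ≠ yf i' := fun i i' h =>
    (Finset.disjoint_left.mp hXY (hxfX i)) (h ▸ hyfY i')
  have hxa : ∀ i, xf i ≠ a := fun i h => haX (h ▸ hxfX i)
  have hxw : ∀ i, xf i ≠ w := fun i h => hwX (h ▸ hxfX i)
  have hya : ∀ i, yf i ≠ a := fun i h => haY (h ▸ hyfY i)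
  have hyw : ∀ i, yf i ≠ w := fun i h => hwY (h ▸ hyfY i)
  have classify : ∀ v : Fin (n + m + 2),
      v.val = 0 ∨ v.val = 1 ∨ (2 ≤ v.val ∧ v.val < n + 2) ∨ (n + 2 ≤ v.val) :=
    fun v => by omega
  have hg_inj : Function.Injective (dsMap n m a w xf yf) := by
    intro v v' h
    rcases classify v with h1 | h1 | ⟨h1, h1'⟩ | h1 <;>
      rcases classify v' with h2 | h2 | ⟨h2, h2'⟩ | h2 <;>
      [ rw [dsMap_zero a w xf yf h1, dsMap_zero a w xf yf h2] at h;
        rw [dsMap_zero a w xf yf h1, dsMap_one a w xf yf h2] at h;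
        rw [dsMap_zero a w xf yf h1, dsMap_x a w xf yf h2 h2'] at h;
        rw [dsMap_zero a w xf yf h1, dsMap_y a w xf yf h2] at h;
        rw [dsMap_one a w xf yf h1, dsMap_zero a w xf yf h2] at h;
        rw [dsMap_one a w xf yf h1, dsMap_one a w xf yf h2] at h;
        rw [dsMap_one a w xf yf h1, dsMap_x a w xf yf h2 h2'] at h;
        rw [dsMap_one a w xf yf h1, dsMap_y a w xf yf h2] at h;
        rw [dsMap_x a w xf yf h1 h1', dsMap_zero a w xf yf h2] at h;
        rw [dsMap_x a w xf yf h1 h1', dsMap_one a w xf yf h2] at h;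
        rw [dsMap_x a w xf yf h1 h1', dsMap_x a w xf yf h2 h2'] at h;
        rw [dsMap_x a w xf yf h1 h1', dsMap_y a w xf yf h2] at h;
        rw [dsMap_y a w xf yf h1, dsMap_zero a w xf yf h2] at h;
        rw [dsMap_y a w xf yf h1, dsMap_one a w xf yf h2] at h;
        rw [dsMap_y a w xf yf h1, dsMap_x a w xf yf h2 h2'] at h;
        rw [dsMap_y a w xf yf h1, dsMap_y a w xf yf h2] at h ]
    · exact Fin.ext (by omega)
    · exact absurd h haw
    · exact absurd h.symm (hxa _)
    · exact absurd h.symm (hya _)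
    · exact absurd h.symm haw
    · exact Fin.ext (by omega)
    · exact absurd h.symm (hxw _)
    · exact absurd h.symm (hyw _)
    · exact absurd h (hxa _)
    · exact absurd h (hxw _)
    · have := hxf_inj h
      have : v.val - 2 = v'.val - 2 := congrArg Fin.val this
      exact Fin.ext (by omega)
    · exact absurd h (hxy _ _)
    · exact absurd h (hya _)
    · exact absurd h (hyw _)
    · exact absurd h.symm (hxy _ _)
    · have := hyf_inj h
      have : v.val - (n + 2) = v'.val - (n + 2) := congrArg Fin.val this
      exact Fin.ext (by omega)
  have key : ∀ v v' : Fin (n + m + 2),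
      ((v.val = 0 ∧ v'.val = 1) ∨
       (v.val = 0 ∧ 2 ≤ v'.val ∧ v'.val ≤ n + 1) ∨
       (v.val = 1 ∧ n + 2 ≤ v'.val)) →
      c s(dsMap n m a w xf yf v, dsMap n m a w xf yf v') = j := by
    rintro v v' (⟨h1, h2⟩ | ⟨h1, h2, h2'⟩ | ⟨h1, h2⟩)
    · rw [dsMap_zero a w xf yf h1, dsMap_one a w xf yf h2]; exact hc
    · rw [dsMap_zero a w xf yf h1, dsMap_x a w xf yf h2 (by omega)]
      exact hXc _ (hxfX _)
    · rw [dsMap_one a w xf yf h1, dsMap_y a w xf yf h2]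
      exact hYc _ (hyfY _)
  refine ⟨⟨dsMap n m a w xf yf, hg_inj⟩, j, ?_⟩
  intro v v' hadj
  rw [doubleStar, SimpleGraph.fromRel_adj] at hadj
  obtain ⟨hne, hrel | hrel⟩ := hadj
  · exact key v v' hrel
  · rw [Sym2.eq_swap]; exact key v' v hrel

/-- If `k ≥ 2`, `n ≥ m ≥ 1` and `(n+1)·⌈(n+1)/(k−1)⌉ > m((k−1)n + m)`,
then `r(S(n,m); k) ≤ kn + m + 2`. -/
theorem stmt_7 (n m k : ℕ) (hk : 2 ≤ k) (hnm : m ≤ n) (hm : 1 ≤ m)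
    (hineq : (n + 1) * ((n + 1) ⌈/⌉ (k - 1)) > m * ((k - 1) * n + m)) :
    ramseyNumber (doubleStar n m) k ≤ k * n + m + 2 := by
  classical
  obtain ⟨k', rfl⟩ : ∃ k', k = k' + 2 := ⟨k - 2, by omega⟩
  rw [show k' + 2 - 1 = k' + 1 from by omega] at hineq
  set q := (n + 1) ⌈/⌉ (k' + 1) with hq
  have hq2 : q * (k' + 1) ≤ n + 1 + k' := by
    have h1 : q = (n + 1 + k') / (k' + 1) := by
      rw [hq, Nat.ceilDiv_eq_add_pred_div,
        show n + 1 + (k' + 1) - 1 = n + 1 + k' from by omega]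
    rw [h1]
    exact Nat.div_mul_le_self _ _
  have hq_pos : 0 < q := by
    rcases Nat.eq_zero_or_pos q with h | h
    · rw [h, mul_zero] at hineq
      exact absurd hineq (Nat.not_lt_zero _)
    · exact h
  apply Nat.sInf_le
  have hmem : IsRamsey (doubleStar n m) (k' + 2) ((k' + 2) * n + m + 2) := by
    intro c
    set P := (k' + 1) * n with hP
    by_contra hno
    set nbr : Fin (k' + 2) → Fin ((k' + 2) * n + m + 2) → Finset (Fin ((k' + 2) * n + m + 2)) :=
      fun j v => Finset.univ.filter (fun w => w ≠ v ∧ c s(v, w) = j) with hnbr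
    have mem_nbr : ∀ j (v w : Fin ((k' + 2) * n + m + 2)), w ∈ nbr j v ↔ w ≠ v ∧ c s(v, w) = j := by
      intro j v w; rw [hnbr]; simp
    have hNval : (Finset.univ : Finset (Fin ((k' + 2) * n + m + 2))).card = P + n + m + 2 := by
      rw [Finset.card_univ, Fintype.card_fin, hP]; ring
    have hcard_color : (Finset.univ : Finset (Fin (k' + 2))).card = k' + 2 := by simp
    have cover : ∀ (v : Fin ((k' + 2) * n + m + 2)) (E : Finset (Fin ((k' + 2) * n + m + 2))), v ∉ E →
        E.card ≤ ∑ j : Fin (k' + 2), (nbr j v ∩ E).card := by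
      intro v E hv
      have hsub : E ⊆ Finset.univ.biUnion (fun j => nbr j v ∩ E) := by
        intro w hw
        refine Finset.mem_biUnion.mpr ⟨c s(v, w), Finset.mem_univ _, ?_⟩
        refine Finset.mem_inter.mpr ⟨(mem_nbr _ _ _).mpr ⟨?_, rfl⟩, hw⟩
        rintro rfl; exact hv hw
      exact (Finset.card_le_card hsub).trans Finset.card_biUnion_le
    have hNpos : 0 < (k' + 2) * n + m + 2 := by positivity
    have hub : ∃ (u : Fin ((k' + 2) * n + m + 2)) (i : Fin (k' + 2)), n + 1 ≤ (nbr i u).card := by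
      by_contra hcon
      push_neg at hcon
      set u : Fin ((k' + 2) * n + m + 2) := ⟨0, hNpos⟩ with hu
      have h1 := cover u (Finset.univ.erase u) (Finset.notMem_erase _ _)
      have h2 : ∑ j : Fin (k' + 2), (nbr j u ∩ Finset.univ.erase u).card ≤ P + n := by
        calc ∑ j : Fin (k' + 2), (nbr j u ∩ Finset.univ.erase u).card
            ≤ ∑ _j : Fin (k' + 2), n := by
              refine Finset.sum_le_sum fun j _ => ?_
              have h := hcon u j
              have h' := Finset.card_le_card (Finset.inter_subset_left
                (s₁ := nbr j u) (s₂ := Finset.univ.erase u))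
              omega
          _ = (k' + 2) * n := by
              rw [Finset.sum_const, hcard_color, smul_eq_mul]
          _ = P + n := by rw [hP]; ring
      have h3 : (Finset.univ.erase u).card = P + n + m + 1 := by
        rw [Finset.card_erase_of_mem (Finset.mem_univ _), hNval]
        omega
      omega
    obtain ⟨u, i₁, hu⟩ := hub
    obtain ⟨A', hA'sub, hA'card⟩ := Finset.exists_subset_card_eq hu
    set D : Finset (Fin ((k' + 2) * n + m + 2)) := Finset.univ \ insert u A' with hD
    have haunotA' : u ∉ A' := fun h => ((mem_nbr i₁ u u).mp (hA'sub h)).1 rfl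
    have hDcard : D.card = P + m := by
      rw [hD, Finset.card_sdiff_of_subset (Finset.subset_univ _),
        Finset.card_insert_of_notMem haunotA', hA'card, hNval]
      omega
    have hA'D : ∀ x ∈ A', x ∉ D := by
      intro x hx hxD
      rw [hD, Finset.mem_sdiff] at hxD
      exact hxD.2 (Finset.mem_insert_of_mem hx)
    have huD : u ∉ D := by
      intro h
      rw [hD, Finset.mem_sdiff] at h
      exact h.2 (Finset.mem_insert_self _ _)
    have claim1 : ∀ a ∈ A', (nbr i₁ a ∩ D).card < m := by
      intro a ha
      by_contra hcon
      push_neg at hcon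
      obtain ⟨Y, hYsub, hYcard⟩ := Finset.exists_subset_card_eq hcon
      have hXcard : (A'.erase a).card = n := by
        rw [Finset.card_erase_of_mem ha, hA'card]
        omega
      have hau : u ≠ a := fun h => haunotA' (h ▸ ha)
      have hYD : ∀ y ∈ Y, y ∈ D := fun y hy => (Finset.mem_inter.mp (hYsub hy)).2
      have hYnbr : ∀ y ∈ Y, y ∈ nbr i₁ a := fun y hy => (Finset.mem_inter.mp (hYsub hy)).1
      refine hno (embed_ds c i₁ u a hau ((mem_nbr i₁ u a).mp (hA'sub ha)).2
        (A'.erase a) Y hXcard hYcard ?_ ?_ ?_ ?_ ?_ ?_ ?_)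
      · exact Finset.disjoint_left.mpr fun x hx hxY =>
          hA'D x (Finset.mem_of_mem_erase hx) (hYD x hxY)
      · exact fun h => haunotA' (Finset.mem_of_mem_erase h)
      · exact Finset.notMem_erase _ _
      · exact fun h => huD (hYD u h)
      · exact fun h => ((mem_nbr i₁ a a).mp (hYnbr a h)).1 rfl
      · exact fun x hx => ((mem_nbr i₁ u x).mp (hA'sub (Finset.mem_of_mem_erase hx))).2
      · exact fun y hy => ((mem_nbr i₁ a y).mp (hYnbr y hy)).2
    have hja : ∀ a ∈ A', ∃ j, j ≠ i₁ ∧ n + 1 ≤ (nbr j a ∩ D).card := by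
      intro a ha
      by_contra hcon
      push_neg at hcon
      have h1 := cover a D (hA'D a ha)
      have h2 : ∑ j : Fin (k' + 2), (nbr j a ∩ D).card =
          (nbr i₁ a ∩ D).card + ∑ j ∈ Finset.univ.erase i₁, (nbr j a ∩ D).card :=
        (Finset.add_sum_erase _ _ (Finset.mem_univ i₁)).symm
      have h3 : ∑ j ∈ Finset.univ.erase i₁, (nbr j a ∩ D).card ≤ P := by
        calc ∑ j ∈ Finset.univ.erase i₁, (nbr j a ∩ D).card
            ≤ ∑ _j ∈ Finset.univ.erase i₁, n := by
              refine Finset.sum_le_sum fun j hj => ?_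
              have := hcon j (Finset.ne_of_mem_erase hj)
              omega
          _ = P := by
              rw [Finset.sum_const, Finset.card_erase_of_mem (Finset.mem_univ _),
                hcard_color, show k' + 2 - 1 = k' + 1 from by omega, smul_eq_mul, hP]
      have h4 := claim1 a ha
      rw [h2] at h1
      omega
    choose! jfun hjne hjcard using hja
    have hfib : (n + 1 : ℕ) =
        ∑ j ∈ Finset.univ.erase i₁, (A'.filter fun a => jfun a = j).card := by
      rw [← hA'card]
      exact Finset.card_eq_sum_card_fiberwise fun a ha =>
        Finset.mem_erase.mpr ⟨hjne a ha, Finset.mem_univ _⟩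
    have hSex : ∃ j, j ≠ i₁ ∧ q ≤ (A'.filter fun a => jfun a = j).card := by
      by_contra hcon
      push_neg at hcon
      obtain ⟨t, hqt⟩ : ∃ t, q = t + 1 := ⟨q - 1, by omega⟩
      have h3 : ∑ j ∈ Finset.univ.erase i₁, (A'.filter fun a => jfun a = j).card
          ≤ (k' + 1) * t := by
        calc ∑ j ∈ Finset.univ.erase i₁, (A'.filter fun a => jfun a = j).card
            ≤ ∑ _j ∈ Finset.univ.erase i₁, t := by
              refine Finset.sum_le_sum fun j hj => ?_
              have := hcon j (Finset.ne_of_mem_erase hj)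
              omega
          _ = (k' + 1) * t := by
              rw [Finset.sum_const, Finset.card_erase_of_mem (Finset.mem_univ _),
                hcard_color, show k' + 2 - 1 = k' + 1 from by omega, smul_eq_mul]
      have h5 : (k' + 1) * t + (k' + 1) ≤ n + 1 + k' := by
        rw [hqt] at hq2
        linarith [hq2]
      set R := (k' + 1) * t with hR
      omega
    obtain ⟨j, hji, hSq⟩ := hSex
    set S := A'.filter (fun a => jfun a = j) with hS
    have hSsub : S ⊆ A' := Finset.filter_subset _ _
    have upper : ∀ w ∈ D, (S.filter fun a => c s(a, w) = j).card ≤ m := by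
      intro w hw
      by_contra hcon
      push_neg at hcon
      set F := S.filter (fun a => c s(a, w) = j) with hF
      have hFne : F.Nonempty := Finset.card_pos.mp (by omega)
      obtain ⟨a₁, ha₁⟩ := hFne
      have ha₁S : a₁ ∈ S := Finset.mem_of_mem_filter _ ha₁
      have ha₁A' : a₁ ∈ A' := hSsub ha₁S
      have hj₁ : jfun a₁ = j := (Finset.mem_filter.mp ha₁S).2
      have hcard₁ : n + 1 ≤ (nbr j a₁ ∩ D).card := by
        rw [← hj₁]; exact hjcard a₁ ha₁A'
      have hXex : n ≤ ((nbr j a₁ ∩ D).erase w).card := by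
        have h := Finset.pred_card_le_card_erase (s := nbr j a₁ ∩ D) (a := w)
        omega
      obtain ⟨X, hXsub, hXcard⟩ := Finset.exists_subset_card_eq hXex
      have hYex : m ≤ (F.erase a₁).card := by
        have := Finset.card_erase_of_mem ha₁
        omega
      obtain ⟨Y, hYsub, hYcard⟩ := Finset.exists_subset_card_eq hYex
      have ha₁w : a₁ ≠ w := fun h => hA'D a₁ ha₁A' (h ▸ hw)
      have hXD : ∀ x ∈ X, x ∈ D := fun x hx =>
        (Finset.mem_inter.mp (Finset.mem_of_mem_erase (hXsub hx))).2
      have hXnbr : ∀ x ∈ X, x ∈ nbr j a₁ := fun x hx =>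
        (Finset.mem_inter.mp (Finset.mem_of_mem_erase (hXsub hx))).1
      have hYF : ∀ y ∈ Y, y ∈ F := fun y hy => Finset.mem_of_mem_erase (hYsub hy)
      have hYA' : ∀ y ∈ Y, y ∈ A' := fun y hy =>
        hSsub (Finset.mem_of_mem_filter _ (hYF y hy))
      refine hno (embed_ds c j a₁ w ha₁w (Finset.mem_filter.mp ha₁).2
        X Y hXcard hYcard ?_ ?_ ?_ ?_ ?_ ?_ ?_)
      · exact Finset.disjoint_left.mpr fun x hx hxY => hA'D x (hYA' x hxY) (hXD x hx)
      · exact fun h => hA'D a₁ ha₁A' (hXD _ h)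
      · exact fun h => (Finset.notMem_erase w _) (hXsub h)
      · exact fun h => Finset.notMem_erase a₁ _ (hYsub h)
      · exact fun h => hA'D w (hYA' w h) hw
      · exact fun x hx => ((mem_nbr j a₁ x).mp (hXnbr x hx)).2
      · intro y hy
        rw [Sym2.eq_swap]
        exact (Finset.mem_filter.mp (hYF y hy)).2
    have lower : ∀ a ∈ S, n + 1 ≤ (D.filter fun w => c s(a, w) = j).card := by
      intro a ha
      have hj₁ : jfun a = j := (Finset.mem_filter.mp ha).2
      have h1 : n + 1 ≤ (nbr j a ∩ D).card := by
        rw [← hj₁]; exact hjcard a (hSsub ha)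
      refine h1.trans (Finset.card_le_card ?_)
      intro w hw
      rw [Finset.mem_inter] at hw
      exact Finset.mem_filter.mpr ⟨hw.2, ((mem_nbr j a w).mp hw.1).2⟩
    have hdc : ∑ a ∈ S, (D.filter fun w => c s(a, w) = j).card
        = ∑ w ∈ D, (S.filter fun a => c s(a, w) = j).card := by
      simp only [Finset.card_filter]
      exact Finset.sum_comm
    have hlow : S.card * (n + 1) ≤ ∑ a ∈ S, (D.filter fun w => c s(a, w) = j).card := by
      have := Finset.card_nsmul_le_sum S _ (n + 1) lower
      simpa [smul_eq_mul] using this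
    have hup : ∑ w ∈ D, (S.filter fun a => c s(a, w) = j).card ≤ D.card * m := by
      have := Finset.sum_le_card_nsmul D _ m upper
      simpa [smul_eq_mul, mul_comm] using this
    have hfin : q * (n + 1) ≤ (P + m) * m := by
      calc q * (n + 1) ≤ S.card * (n + 1) := Nat.mul_le_mul_right _ hSq
        _ ≤ ∑ a ∈ S, (D.filter fun w => c s(a, w) = j).card := hlow
        _ = ∑ w ∈ D, (S.filter fun a => c s(a, w) = j).card := hdc
        _ ≤ D.card * m := hup
        _ = (P + m) * m := by rw [hDcard]
    nlinarith [hfin, hineq]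
  exact hmem
end

section
/- Let k ≥ 3 and n ≥ (k−1)(k−2) be integers. Then r(S(n,1); k) ≤ kn + 3. -/
open SimpleGraph

/-!
Suppose a `k`-coloring of `K_{kn+3}` has no monochromatic `S(n,1)`, and write `N_i(u)` for
the `i`-neighbourhood of `u`. If `|N_i(u)| ≥ n + 1` and `v ∈ N_i(u)`, then
`N_i(v) ⊆ {u} ∪ N_i(u)`, since otherwise `u`, `v` and `n` further `i`-neighbours of `u` span a
copy; if even `|N_i(u)| ≥ n + 2`, then `N_i(v) = {u}`. A vertex with a single `i`-neighbour has
degree at least `n + k - 1` in another color, and the closed neighbourhoods of the vertices of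
`i`-degree at least `n + 2` are pairwise disjoint. Counting these shows that every color degree
is at most `n + 1`, so every vertex has colors of degree exactly `n + 1`, and for each color
their closed neighbourhoods form at most `k - 2` disjoint blocks of size `n + 2`.

Fix such a block `C` of color `a`. Every `x ∈ C` has at least `1 + (n + 1 - |N_a(x)|)` colors
`b ≠ a` of degree `n + 1`, and there are at most `(k - 1)(k - 2)` blocks of such colors. If `x`
and an earlier `y ∈ C` give the same `b`-block, then `xy` has color `b ≠ a`, and `x` has only
`n + 1 - |N_a(x)|` edges inside `C` that are not colored `a`. Summing over `C` gives
`n + 2 ≤ (k - 1)(k - 2)`.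
-/

open Finset

theorem Finset.card_le_card_image_add_card_filter_exists_lt {ι β : Type*} [LinearOrder ι]
    [DecidableEq β] (s : Finset ι) (f : ι → β)
    [DecidablePred fun x => ∃ y ∈ s, y < x ∧ f y = f x] :
    #s ≤ #(s.image f) + #{x ∈ s | ∃ y ∈ s, y < x ∧ f y = f x} := by
  rw [← card_filter_add_card_filter_not (s := s) (fun x => ∃ y ∈ s, y < x ∧ f y = f x),
    add_comm]
  refine Nat.add_le_add_right (card_le_card_of_injOn f
    (fun x hx => mem_image_of_mem f (mem_filter.1 hx).1) ?_) _
  intro x hx x' hx' hxx'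
  simp only [coe_filter, Set.mem_ofPred_eq, not_exists, not_and] at hx hx'
  rcases lt_trichotomy x x' with h | h | h
  · exact absurd hxx' (hx'.2 x hx.1 h)
  · exact h
  · exact absurd hxx'.symm (hx.2 x' hx'.1 h)

theorem Finset.sum_le_card_mul_add_card_filter_eq {ι : Type*} {s : Finset ι} {f : ι → ℕ}
    {n : ℕ} (hf : ∀ i ∈ s, f i ≤ n + 1) : ∑ i ∈ s, f i ≤ #s * n + #{i ∈ s | f i = n + 1} := by
  calc ∑ i ∈ s, f i ≤ ∑ i ∈ s, (n + if f i = n + 1 then 1 else 0) :=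
        sum_le_sum fun i hi => by have := hf i hi; split_ifs <;> omega
    _ = #s * n + #{i ∈ s | f i = n + 1} := by
        rw [sum_add_distrib, sum_const, smul_eq_mul, sum_boole, Nat.cast_id]

namespace DoubleStarRamsey

section Coloring

variable {N : ℕ} {α : Type} (c : Sym2 (Fin N) → α)

theorem hasMonoCopy_doubleStar_of_edges {n : ℕ} {i : α} {u v w : Fin N} {L : Finset (Fin N)}
    (hL : #L = n) (huv : u ≠ v) (huw : u ≠ w) (hvw : v ≠ w) (huL : u ∉ L) (hvL : v ∉ L)
    (hwL : w ∉ L) (hcuv : c s(u, v) = i) (hcvw : c s(v, w) = i)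
    (hcuL : ∀ x ∈ L, c s(u, x) = i) :
    HasMonoCopy (doubleStar n 1) c := by
  set e : Fin n → Fin N := fun t => L.orderEmbOfFin hL t
  have heL : ∀ t, e t ∈ L := L.orderEmbOfFin_mem hL
  let f : Fin (n + 1 + 2) → Fin N := Fin.cons u (Fin.cons v (Fin.snoc e w))
  have hf : Function.Injective f := by
    refine Fin.cons_injective_iff.2 ⟨?_, Fin.cons_injective_iff.2 ⟨?_,
      Fin.snoc_injective_iff.2 ⟨(L.orderEmbOfFin hL).injective, ?_⟩⟩⟩
    · simp only [Fin.range_cons, Fin.range_snoc, Set.mem_insert_iff, Set.mem_range, not_or]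
      exact ⟨huv, huw, fun ⟨t, ht⟩ => huL (ht ▸ heL t)⟩
    · simp only [Fin.range_snoc, Set.mem_insert_iff, Set.mem_range, not_or]
      exact ⟨hvw, fun ⟨t, ht⟩ => hvL (ht ▸ heL t)⟩
    · exact fun ⟨t, ht⟩ => hwL (ht ▸ heL t)
  have hrel : ∀ x y : Fin (n + 1 + 2), (x.val = 0 ∧ y.val = 1) ∨
      (x.val = 0 ∧ 2 ≤ y.val ∧ y.val ≤ n + 1) ∨ (x.val = 1 ∧ n + 2 ≤ y.val) →
      c s(f x, f y) = i := by
    rintro x y (⟨hx, hy⟩ | ⟨hx, hy, hy'⟩ | ⟨hx, hy⟩)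
    · obtain rfl : x = 0 := Fin.ext hx
      obtain rfl : y = 1 := Fin.ext hy
      exact hcuv
    · obtain rfl : x = 0 := Fin.ext hx
      rw [show y = (Fin.castSucc ⟨y.val - 2, by omega⟩).succ.succ from Fin.ext (by simp; omega)]
      simp only [f, Fin.cons_succ, Fin.cons_zero, Fin.snoc_castSucc]
      exact hcuL _ (heL _)
    · obtain rfl : x = 1 := Fin.ext hx
      obtain rfl : y = (Fin.last n).succ.succ := Fin.ext (by simp; omega)
      simpa [f] using hcvw
  refine ⟨⟨f, hf⟩, i, fun x y hxy => ?_⟩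
  obtain ⟨-, h | h⟩ := SimpleGraph.fromRel_adj _ _ _ |>.1 hxy
  · exact hrel x y h
  · exact Sym2.eq_swap ▸ hrel y x h

variable [DecidableEq α]

def colorNbrs (i : α) (u : Fin N) : Finset (Fin N) := {v | v ≠ u ∧ c s(u, v) = i}

def closedColorNbrs (i : α) (u : Fin N) : Finset (Fin N) := insert u (colorNbrs c i u)

variable {c}

@[simp]
theorem mem_colorNbrs {i : α} {u v : Fin N} : v ∈ colorNbrs c i u ↔ v ≠ u ∧ c s(u, v) = i := by
  simp [colorNbrs]

theorem mem_colorNbrs_comm {i : α} {u v : Fin N} : v ∈ colorNbrs c i u ↔ u ∈ colorNbrs c i v := by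
  simp only [mem_colorNbrs, Sym2.eq_swap (a := u), ne_comm]

theorem self_notMem_colorNbrs {i : α} {u : Fin N} : u ∉ colorNbrs c i u := by
  simp

theorem card_closedColorNbrs {i : α} {u : Fin N} :
    #(closedColorNbrs c i u) = #(colorNbrs c i u) + 1 :=
  card_insert_of_notMem self_notMem_colorNbrs

theorem sum_card_colorNbrs [Fintype α] (u : Fin N) : ∑ i, #(colorNbrs c i u) = N - 1 := by
  calc ∑ i, #(colorNbrs c i u) = ∑ i, #{v ∈ univ.erase u | c s(u, v) = i} := by
        refine sum_congr rfl fun i _ => congrArg card ?_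
        ext v
        simp [and_comm]
    _ = N - 1 := by
        rw [← card_eq_sum_card_fiberwise (fun _ _ => mem_univ _), card_erase_of_mem (mem_univ u),
          card_univ, Fintype.card_fin]

variable {n : ℕ}

theorem card_erase_erase_colorNbrs_lt (hno : ¬ HasMonoCopy (doubleStar n 1) c) {i : α}
    {u v w : Fin N} (hv : v ∈ colorNbrs c i u) (hw : w ∈ colorNbrs c i v) (hwu : w ≠ u) :
    #(((colorNbrs c i u).erase v).erase w) < n := by
  by_contra! h
  obtain ⟨L, hLsub, hL⟩ := exists_subset_card_eq h
  have hLu : L ⊆ colorNbrs c i u := hLsub.trans ((erase_subset _ _).trans (erase_subset _ _))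
  rw [mem_colorNbrs] at hv hw
  refine hno (hasMonoCopy_doubleStar_of_edges c hL hv.1.symm hwu.symm hw.1.symm
    (fun h => self_notMem_colorNbrs (hLu h)) (fun h => ?_) (fun h => ?_) hv.2 hw.2
    (fun x hx => (mem_colorNbrs.1 (hLu hx)).2))
  · exact (mem_erase.1 (mem_of_mem_erase (hLsub h))).1 rfl
  · exact (mem_erase.1 (hLsub h)).1 rfl

theorem colorNbrs_subset_closedColorNbrs (hno : ¬ HasMonoCopy (doubleStar n 1) c) {i : α}
    {u v : Fin N} (hu : n + 1 ≤ #(colorNbrs c i u)) (hv : v ∈ colorNbrs c i u) :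
    colorNbrs c i v ⊆ closedColorNbrs c i u := by
  intro w hw
  by_contra hwC
  rw [closedColorNbrs, mem_insert, not_or] at hwC
  have := card_erase_erase_colorNbrs_lt hno hv hw hwC.1
  rw [erase_eq_of_notMem (fun h => hwC.2 (mem_of_mem_erase h)), card_erase_of_mem hv] at this
  omega

theorem colorNbrs_eq_singleton (hno : ¬ HasMonoCopy (doubleStar n 1) c) {i : α}
    {u v : Fin N} (hu : n + 2 ≤ #(colorNbrs c i u)) (hv : v ∈ colorNbrs c i u) :
    colorNbrs c i v = {u} := by
  refine eq_singleton_iff_unique_mem.2 ⟨mem_colorNbrs_comm.1 hv, fun w hw => ?_⟩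
  by_contra hwu
  have hwN : w ∈ colorNbrs c i u :=
    (mem_insert.1 (colorNbrs_subset_closedColorNbrs hno (by omega) hv hw)).resolve_left hwu
  have := card_erase_erase_colorNbrs_lt hno hv hw hwu
  rw [card_erase_of_mem (mem_erase.2 ⟨(mem_colorNbrs.1 hw).1, hwN⟩), card_erase_of_mem hv]
    at this
  omega

theorem disjoint_closedColorNbrs_of_le_card (hno : ¬ HasMonoCopy (doubleStar n 1) c) {i : α}
    {w w' : Fin N} (hw : n + 2 ≤ #(colorNbrs c i w)) (hw' : n + 2 ≤ #(colorNbrs c i w'))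
    (hne : w ≠ w') : Disjoint (closedColorNbrs c i w) (closedColorNbrs c i w') := by
  have notMem_of_le_card : ∀ {x y : Fin N}, n + 2 ≤ #(colorNbrs c i x) →
      n + 2 ≤ #(colorNbrs c i y) → x ∉ colorNbrs c i y := fun hx hy hxy => by
    rw [colorNbrs_eq_singleton hno hy hxy, card_singleton] at hx
    omega
  rw [Finset.disjoint_left]
  intro z hz hz'
  rcases mem_insert.1 hz with rfl | hz <;> rcases mem_insert.1 hz' with rfl | hz'
  · exact hne rfl
  · exact notMem_of_le_card hw hw' hz'
  · exact notMem_of_le_card hw' hw hz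
  · exact hne (singleton_injective ((colorNbrs_eq_singleton hno hw hz).symm.trans
      (colorNbrs_eq_singleton hno hw' hz')))

theorem card_filter_le_card_colorNbrs_mul_le (hno : ¬ HasMonoCopy (doubleStar n 1) c) (i : α)
    {t : ℕ} (ht : n + 2 ≤ t) : #{w | t ≤ #(colorNbrs c i w)} * (t + 1) ≤ N := by
  set H : Finset (Fin N) := {w | t ≤ #(colorNbrs c i w)}
  have hdisj : (H : Set (Fin N)).PairwiseDisjoint (closedColorNbrs c i) :=
    fun w hw w' hw' hne => disjoint_closedColorNbrs_of_le_card hno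
      (ht.trans (mem_filter.1 hw).2) (ht.trans (mem_filter.1 hw').2) hne
  calc #H * (t + 1) ≤ ∑ w ∈ H, #(closedColorNbrs c i w) := by
        rw [← smul_eq_mul]
        refine card_nsmul_le_sum _ _ _ fun w hw => ?_
        rw [card_closedColorNbrs]
        exact Nat.add_le_add_right (mem_filter.1 hw).2 1
    _ = #(H.biUnion (closedColorNbrs c i)) := (card_biUnion hdisj).symm
    _ ≤ N := card_le_univ _ |>.trans_eq (Fintype.card_fin N)

theorem colorNbrs_subset_of_mem_closedColorNbrs (hno : ¬ HasMonoCopy (doubleStar n 1) c)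
    {i : α} {x y : Fin N} (hx : n + 1 ≤ #(colorNbrs c i x)) (hy : y ∈ closedColorNbrs c i x) :
    colorNbrs c i y ⊆ closedColorNbrs c i x := by
  rcases mem_insert.1 hy with rfl | hy
  · exact subset_insert _ _
  · exact colorNbrs_subset_closedColorNbrs hno hx hy

theorem disjoint_closedColorNbrs_of_notMem (hno : ¬ HasMonoCopy (doubleStar n 1) c)
    {i : α} {u x : Fin N} (hx : n + 1 ≤ #(colorNbrs c i x)) (hu : u ∉ closedColorNbrs c i x) :
    Disjoint (closedColorNbrs c i u) (closedColorNbrs c i x) := by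
  rw [Finset.disjoint_left]
  intro z hzu hzx
  rcases mem_insert.1 hzu with rfl | hz
  · exact hu hzx
  · exact hu (colorNbrs_subset_of_mem_closedColorNbrs hno hx hzx (mem_colorNbrs_comm.1 hz))

theorem closedColorNbrs_eq_of_mem (hno : ¬ HasMonoCopy (doubleStar n 1) c) {i : α}
    {x x' : Fin N} (hx : #(colorNbrs c i x) = n + 1) (hx' : #(colorNbrs c i x') = n + 1)
    (hmem : x' ∈ closedColorNbrs c i x) : closedColorNbrs c i x' = closedColorNbrs c i x :=
  eq_of_subset_of_card_le
    (insert_subset hmem (colorNbrs_subset_of_mem_closedColorNbrs hno hx.ge hmem))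
    (by rw [card_closedColorNbrs, card_closedColorNbrs, hx, hx'])

theorem card_filter_exists_mem_colorNbrs_le [Fintype α] {C : Finset (Fin N)} {a : α}
    {x : Fin N} (hx : x ∈ C) (haC : colorNbrs c a x ⊆ C) :
    #{b ∈ univ.erase a | ∃ y ∈ C, y ∈ colorNbrs c b x} ≤ #C - 1 - #(colorNbrs c a x) := by
  have hsub : colorNbrs c a x ⊆ C.erase x :=
    fun y hy => mem_erase.2 ⟨(mem_colorNbrs.1 hy).1, haC hy⟩
  calc _ ≤ #((C.erase x \ colorNbrs c a x).image fun y => c s(x, y)) := by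
        refine card_le_card fun b hb => ?_
        obtain ⟨hba, y, hyC, hy⟩ := mem_filter.1 hb
        rw [mem_colorNbrs] at hy
        refine mem_image.2 ⟨y, mem_sdiff.2 ⟨mem_erase.2 ⟨hy.1, hyC⟩, fun hya => ?_⟩, hy.2⟩
        exact (mem_erase.1 hba).1 (hy.2.symm.trans (mem_colorNbrs.1 hya).2)
    _ ≤ #(C.erase x \ colorNbrs c a x) := card_image_le
    _ = #C - 1 - #(colorNbrs c a x) := by
        rw [card_sdiff_of_subset hsub, card_erase_of_mem hx]

end Coloring

section KColoring

variable {n k : ℕ} {c : Sym2 (Fin (k * n + 3)) → Fin k}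

theorem exists_le_card_colorNbrs_of_card_eq_one (hk : 3 ≤ k) (hn : (k - 1) * (k - 2) ≤ n)
    {i : Fin k} {v : Fin (k * n + 3)} (hv : #(colorNbrs c i v) = 1) :
    ∃ j ≠ i, n + k - 1 ≤ #(colorNbrs c j v) := by
  have hsum := add_sum_erase univ (fun j => #(colorNbrs c j v)) (mem_univ i)
  rw [sum_card_colorNbrs, hv] at hsum
  replace hsum : ∑ j ∈ univ.erase i, #(colorNbrs c j v) = k * n + 1 := by omega
  have hlt : ∑ _j ∈ univ.erase i, (n + k - 2) < ∑ j ∈ univ.erase i, #(colorNbrs c j v) := by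
    rw [sum_const, card_erase_of_mem (mem_univ i), card_univ, Fintype.card_fin, smul_eq_mul]
    rw [hsum]
    zify [show 1 ≤ k by omega, show 2 ≤ k by omega, show 2 ≤ n + k by omega] at hn ⊢
    nlinarith
  obtain ⟨j, hj, hjv⟩ := exists_lt_of_sum_lt hlt
  exact ⟨j, (mem_erase.1 hj).1, by omega⟩

theorem card_colorNbrs_le (hno : ¬ HasMonoCopy (doubleStar n 1) c) (hk : 3 ≤ k)
    (hn : (k - 1) * (k - 2) ≤ n) (i : Fin k) (u : Fin (k * n + 3)) :
    #(colorNbrs c i u) ≤ n + 1 := by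
  by_contra! hu
  obtain ⟨v, hv⟩ : (colorNbrs c i u).Nonempty := card_pos.1 (by omega)
  have card_eq_one : ∀ {j : Fin k} {x y : Fin (k * n + 3)}, n + 2 ≤ #(colorNbrs c j x) →
      y ∈ colorNbrs c j x → #(colorNbrs c j y) = 1 := fun hx hy => by
    rw [colorNbrs_eq_singleton hno hx hy, card_singleton]
  obtain ⟨j, -, hj⟩ := exists_le_card_colorNbrs_of_card_eq_one hk hn (card_eq_one hu hv)
  -- every `j`-neighbour of `v` is a `j`-leaf
  have hcover : colorNbrs c j v ⊆
      (univ.erase j).biUnion fun s => {w | n + k - 1 ≤ #(colorNbrs c s w)} := by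
    intro w hw
    obtain ⟨s, hsj, hs⟩ :=
      exists_le_card_colorNbrs_of_card_eq_one hk hn (card_eq_one (by omega) hw)
    exact mem_biUnion.2 ⟨s, mem_erase.2 ⟨hsj, mem_univ s⟩, mem_filter.2 ⟨mem_univ w, hs⟩⟩
  have : (n + k - 1) * (n + k - 1 + 1) ≤ (k - 1) * (k * n + 3) :=
    calc (n + k - 1) * (n + k - 1 + 1)
        ≤ #((univ.erase j).biUnion fun s => {w | n + k - 1 ≤ #(colorNbrs c s w)}) *
            (n + k - 1 + 1) := Nat.mul_le_mul_right _ (hj.trans (card_le_card hcover))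
      _ ≤ ∑ s ∈ univ.erase j, #{w | n + k - 1 ≤ #(colorNbrs c s w)} * (n + k - 1 + 1) := by
          rw [← sum_mul]
          exact Nat.mul_le_mul_right _ card_biUnion_le
      _ ≤ ∑ _s ∈ univ.erase j, (k * n + 3) :=
          sum_le_sum fun s _ => card_filter_le_card_colorNbrs_mul_le hno s (by omega)
      _ = (k - 1) * (k * n + 3) := by
          rw [sum_const, card_erase_of_mem (mem_univ j), card_univ, Fintype.card_fin, smul_eq_mul]
  zify [show 1 ≤ k by omega, show 2 ≤ k by omega, show 1 ≤ n + k by omega] at hn this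
  nlinarith

theorem le_card_colorNbrs_add_card_filter (hno : ¬ HasMonoCopy (doubleStar n 1) c)
    (hk : 3 ≤ k) (hn : (k - 1) * (k - 2) ≤ n) (a : Fin k) (u : Fin (k * n + 3)) :
    n + 2 ≤ #(colorNbrs c a u) + #{i ∈ univ.erase a | #(colorNbrs c i u) = n + 1} := by
  have hsum := add_sum_erase univ (fun i => #(colorNbrs c i u)) (mem_univ a)
  rw [sum_card_colorNbrs] at hsum
  have hle := sum_le_card_mul_add_card_filter_eq (s := univ.erase a)
    fun i _ => card_colorNbrs_le hno hk hn i u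
  rw [card_erase_of_mem (mem_univ a), card_univ, Fintype.card_fin] at hle
  have : (k - 1) * n + n = k * n := by
    rw [← Nat.succ_mul, Nat.succ_eq_add_one, Nat.sub_add_cancel (by omega)]
  omega

theorem exists_card_colorNbrs_eq (hno : ¬ HasMonoCopy (doubleStar n 1) c) (hk : 3 ≤ k)
    (hn : (k - 1) * (k - 2) ≤ n) (u : Fin (k * n + 3)) : ∃ a, #(colorNbrs c a u) = n + 1 := by
  let i : Fin k := ⟨0, by omega⟩
  have h := le_card_colorNbrs_add_card_filter hno hk hn i u
  have := card_colorNbrs_le hno hk hn i u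
  obtain ⟨a, ha⟩ : ({a ∈ univ.erase i | #(colorNbrs c a u) = n + 1} : Finset (Fin k)).Nonempty :=
    card_pos.1 (by omega)
  exact ⟨a, (mem_filter.1 ha).2⟩

variable (c) in
def components (b : Fin k) : Finset (Finset (Fin (k * n + 3))) :=
  ({x | #(colorNbrs c b x) = n + 1} : Finset (Fin (k * n + 3))).image (closedColorNbrs c b)

theorem pairwiseDisjoint_components (hno : ¬ HasMonoCopy (doubleStar n 1) c) (b : Fin k) :
    (components c b : Set (Finset (Fin (k * n + 3)))).PairwiseDisjoint id := by
  rintro _ hD _ hD' hne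
  obtain ⟨x, hx, rfl⟩ := mem_image.1 hD
  obtain ⟨x', hx', rfl⟩ := mem_image.1 hD'
  rw [mem_filter] at hx hx'
  by_cases hmem : x' ∈ closedColorNbrs c b x
  · exact absurd (closedColorNbrs_eq_of_mem hno hx.2 hx'.2 hmem).symm hne
  · exact (disjoint_closedColorNbrs_of_notMem hno hx.2.ge hmem).symm

theorem card_biUnion_components (hno : ¬ HasMonoCopy (doubleStar n 1) c) (b : Fin k) :
    #((components c b).biUnion id) = #(components c b) * (n + 2) := by
  rw [card_biUnion (pairwiseDisjoint_components hno b)]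
  refine sum_const_nat fun D hD => ?_
  obtain ⟨x, hx, rfl⟩ := mem_image.1 hD
  rw [id, card_closedColorNbrs, (mem_filter.1 hx).2]

theorem disjoint_closedColorNbrs_biUnion_components (hno : ¬ HasMonoCopy (doubleStar n 1) c)
    {b : Fin k} {u : Fin (k * n + 3)} (hu : u ∉ (components c b).biUnion id) :
    Disjoint (closedColorNbrs c b u) ((components c b).biUnion id) := by
  refine disjoint_biUnion_right _ _ _ |>.2 fun D hD => ?_
  obtain ⟨x, hx, rfl⟩ := mem_image.1 hD
  exact disjoint_closedColorNbrs_of_notMem hno (mem_filter.1 hx).2.ge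
    fun h => hu (mem_biUnion.2 ⟨_, hD, h⟩)

theorem card_components_le (hno : ¬ HasMonoCopy (doubleStar n 1) c) (hk : 3 ≤ k)
    (hn : (k - 1) * (k - 2) ≤ n) (b : Fin k) : #(components c b) ≤ k - 2 := by
  have hcard := card_biUnion_components hno b
  by_contra! hlarge
  by_cases hcover : (components c b).biUnion id = univ
  · rw [hcover, card_univ, Fintype.card_fin] at hcard
    zify [show 1 ≤ k by omega, show 2 ≤ k by omega] at hn hlarge
    rcases (show #(components c b) = k - 1 ∨ k ≤ #(components c b) by omega) with hm | hm
    · rw [hm] at hcard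
      zify [show 1 ≤ k by omega] at hcard
      nlinarith
    · nlinarith
  · obtain ⟨u, hu⟩ : ∃ u, u ∉ (components c b).biUnion id := by
      simpa [eq_univ_iff_forall] using hcover
    have hfits := card_le_univ (closedColorNbrs c b u ∪ (components c b).biUnion id)
    rw [card_union_of_disjoint (disjoint_closedColorNbrs_biUnion_components hno hu),
      card_closedColorNbrs, hcard, Fintype.card_fin] at hfits
    have hu_deg := le_card_colorNbrs_add_card_filter hno hk hn b u
    have hstrong : #{i ∈ univ.erase b | #(colorNbrs c i u) = n + 1} ≤ k - 1 :=
      (card_filter_le _ _).trans (by rw [card_erase_of_mem (mem_univ b), card_univ,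
        Fintype.card_fin])
    zify [show 1 ≤ k by omega, show 2 ≤ k by omega] at hlarge hstrong
    nlinarith

theorem card_filter_le_add_card_filter_exists_mem_colorNbrs
    (hno : ¬ HasMonoCopy (doubleStar n 1) c) (hk : 3 ≤ k) (hn : (k - 1) * (k - 2) ≤ n)
    (b : Fin k) (C : Finset (Fin (k * n + 3))) :
    #{x ∈ C | #(colorNbrs c b x) = n + 1} ≤
      k - 2 + #{x ∈ C | ∃ y ∈ C, y ∈ colorNbrs c b x} := by
  set s : Finset (Fin (k * n + 3)) := {x ∈ C | #(colorNbrs c b x) = n + 1}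
  refine (card_le_card_image_add_card_filter_exists_lt s (closedColorNbrs c b)).trans
    (Nat.add_le_add ?_ (card_le_card fun x hx => ?_))
  · exact (card_le_card (image_subset_image (filter_subset_filter _ (subset_univ C)))).trans
      (card_components_le hno hk hn b)
  · obtain ⟨hxs, y, hys, hyx, hxy⟩ := mem_filter.1 hx
    have hy : y ∈ closedColorNbrs c b x := hxy ▸ mem_insert_self y _
    exact mem_filter.2 ⟨(mem_filter.1 hxs).1, y, (mem_filter.1 hys).1,
      (mem_insert.1 hy).resolve_left hyx.ne⟩

variable (c) in
theorem hasMonoCopy_doubleStar (hk : 3 ≤ k) (hn : (k - 1) * (k - 2) ≤ n) :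
    HasMonoCopy (doubleStar n 1) c := by
  by_contra hno
  set u₀ : Fin (k * n + 3) := ⟨0, by omega⟩
  obtain ⟨a, ha⟩ := exists_card_colorNbrs_eq hno hk hn u₀
  set C := closedColorNbrs c a u₀
  have hC : #C = n + 2 := by rw [card_closedColorNbrs, ha]
  have hCa : ∀ x ∈ C, colorNbrs c a x ⊆ C :=
    fun x hx => colorNbrs_subset_of_mem_closedColorNbrs hno ha.ge hx
  -- double count pairs `(x, b)`, `x ∈ C`, `b ≠ a`, with `x` of degree `n + 1` in color `b`
  have key : ∑ x ∈ C, (1 + (n + 1 - #(colorNbrs c a x))) ≤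
      (k - 1) * (k - 2) + ∑ x ∈ C, (n + 1 - #(colorNbrs c a x)) :=
    calc ∑ x ∈ C, (1 + (n + 1 - #(colorNbrs c a x)))
        ≤ ∑ x ∈ C, #{b ∈ univ.erase a | #(colorNbrs c b x) = n + 1} :=
          sum_le_sum fun x _ => by
            have := le_card_colorNbrs_add_card_filter hno hk hn a x
            have := card_colorNbrs_le hno hk hn a x
            omega
      _ = ∑ b ∈ univ.erase a, #{x ∈ C | #(colorNbrs c b x) = n + 1} :=
          sum_card_bipartiteAbove_eq_sum_card_bipartiteBelow _
      _ ≤ ∑ b ∈ univ.erase a, (k - 2 + #{x ∈ C | ∃ y ∈ C, y ∈ colorNbrs c b x}) :=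
          sum_le_sum fun b _ => card_filter_le_add_card_filter_exists_mem_colorNbrs hno hk hn b C
      _ = (k - 1) * (k - 2) + ∑ x ∈ C, #{b ∈ univ.erase a | ∃ y ∈ C, y ∈ colorNbrs c b x} := by
          rw [sum_add_distrib, sum_const, card_erase_of_mem (mem_univ a), card_univ,
            Fintype.card_fin, smul_eq_mul]
          exact congrArg _ (sum_card_bipartiteAbove_eq_sum_card_bipartiteBelow _).symm
      _ ≤ (k - 1) * (k - 2) + ∑ x ∈ C, (n + 1 - #(colorNbrs c a x)) :=
          Nat.add_le_add_left (sum_le_sum fun x hx =>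
            (card_filter_exists_mem_colorNbrs_le hx (hCa x hx)).trans_eq (by rw [hC]; rfl)) _
  rw [sum_add_distrib, sum_const, smul_eq_mul, mul_one, hC] at key
  omega

end KColoring
end DoubleStarRamsey

/-- If `k ≥ 3` and `n ≥ (k−1)(k−2)`, then `r(S(n,1); k) ≤ kn + 3`. -/
theorem stmt_9 (n k : ℕ) (hk : 3 ≤ k) (hn : (k - 1) * (k - 2) ≤ n) :
    ramseyNumber (doubleStar n 1) k ≤ k * n + 3 :=
  Nat.sInf_le fun c => DoubleStarRamsey.hasMonoCopy_doubleStar c hk hn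
end

section
/- Let k ≥ 2 and n ≥ 2, n ≥ m ≥ 1 be integers, and set t = ⌈(n−m+1)/(k−1)⌉. If t > m and nt > (t−m)(m−1)t + m((n−1)(k−1) + m), then r(S_n^m; k) ≤ k(n−1) + m + 2. -/
open SimpleGraph

-- helpers
lemma hallEasy {β : Type} [DecidableEq β] {m : ℕ} (P : Fin m → Finset β)
    (hP : ∀ ℓ, m ≤ (P ℓ).card) :
    ∃ p : Fin m → β, Function.Injective p ∧ ∀ ℓ, p ℓ ∈ P ℓ := by
  apply (Finset.all_card_le_biUnion_card_iff_existsInjective' P).mp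
  intro s
  rcases s.eq_empty_or_nonempty with rfl | ⟨x, hx⟩
  · simp
  · calc s.card ≤ (Finset.univ : Finset (Fin m)).card := Finset.card_le_univ s
      _ = m := by simp
      _ ≤ (P x).card := hP x
      _ ≤ (s.biUnion P).card :=
        Finset.card_le_card (Finset.subset_biUnion_of_mem P hx)

lemma enumHelper {β : Type} [LinearOrder β] (s : Finset β) {r : ℕ} (h : s.card = r) :
    ∃ g : Fin r → β, Function.Injective g ∧ ∀ i, g i ∈ s :=
  ⟨fun i => (s.orderIsoOfFin h i : β),
    fun x y hxy => (s.orderIsoOfFin h).injective (Subtype.coe_injective hxy),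
    fun i => (s.orderIsoOfFin h i).2⟩

def embFun (n m N : ℕ) (x0 : Fin N) (sv pv : Fin m → Fin N) (lv : Fin (n - m) → Fin N) :
    Fin (n + m + 1) → Fin N := fun x =>
  if h1 : x.val = 0 then x0
  else if h2 : x.val ≤ m then sv ⟨x.val - 1, by omega⟩
  else if h3 : x.val ≤ 2 * m then pv ⟨x.val - (m + 1), by omega⟩
  else lv ⟨x.val - (2 * m + 1), by have := x.isLt; omega⟩

lemma embFun_cases (n m N : ℕ) (x0 : Fin N) (sv pv : Fin m → Fin N)
    (lv : Fin (n - m) → Fin N) (x : Fin (n + m + 1)) :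
    (x.val = 0 ∧ embFun n m N x0 sv pv lv x = x0) ∨
    (∃ ℓ : Fin m, x.val = ℓ.val + 1 ∧ embFun n m N x0 sv pv lv x = sv ℓ) ∨
    (∃ ℓ : Fin m, x.val = ℓ.val + m + 1 ∧ embFun n m N x0 sv pv lv x = pv ℓ) ∨
    (∃ ℓ : Fin (n - m), x.val = ℓ.val + 2 * m + 1 ∧ embFun n m N x0 sv pv lv x = lv ℓ) := by
  by_cases h1 : x.val = 0
  · exact Or.inl ⟨h1, dif_pos h1⟩
  · by_cases h2 : x.val ≤ m
    · refine Or.inr (Or.inl ⟨⟨x.val - 1, by omega⟩, show x.val = x.val - 1 + 1 by omega, ?_⟩)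
      rw [embFun, dif_neg h1, dif_pos h2]
    · by_cases h3 : x.val ≤ 2 * m
      · refine Or.inr (Or.inr (Or.inl ⟨⟨x.val - (m + 1), by omega⟩,
          show x.val = x.val - (m + 1) + m + 1 by omega, ?_⟩))
        rw [embFun, dif_neg h1, dif_neg h2, dif_pos h3]
      · refine Or.inr (Or.inr (Or.inr ⟨⟨x.val - (2 * m + 1), by have := x.isLt; omega⟩,
          show x.val = x.val - (2 * m + 1) + 2 * m + 1 by omega, ?_⟩))
        rw [embFun, dif_neg h1, dif_neg h2, dif_neg h3]

lemma emb {n m N : ℕ} {α : Type} (hm : 1 ≤ m) (hmn : m ≤ n)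
    (c : Sym2 (Fin N) → α) (j : α) (x0 : Fin N) (S : Finset (Fin N))
    (hScard : S.card = n) (hx0S : x0 ∉ S) (hSc : ∀ w ∈ S, c s(x0, w) = j)
    (sv pv : Fin m → Fin N) (hsvInj : Function.Injective sv) (hpvInj : Function.Injective pv)
    (hsvS : ∀ ℓ, sv ℓ ∈ S) (hpvS : ∀ ℓ, pv ℓ ∉ S) (hpvx : ∀ ℓ, pv ℓ ≠ x0)
    (hc : ∀ ℓ, c s(sv ℓ, pv ℓ) = j) :
    HasMonoCopy (subdividedStar n m) c := by
  classical
  have himg : (Finset.image sv Finset.univ).card ≤ m :=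
    le_trans Finset.card_image_le (by simp)
  have hsd : n - m ≤ (S \ Finset.image sv Finset.univ).card := by
    have h := Finset.le_card_sdiff (Finset.image sv Finset.univ) S
    omega
  obtain ⟨L, hLsub, hLcard⟩ := Finset.exists_subset_card_eq hsd
  set lv : Fin (n - m) → Fin N := fun idx => (L.orderIsoOfFin hLcard idx : Fin N) with hlv
  have hlvInj : Function.Injective lv := fun a b hab =>
    (L.orderIsoOfFin hLcard).injective (Subtype.coe_injective hab)
  have hlvmem : ∀ idx, lv idx ∈ S ∧ lv idx ∉ Finset.image sv Finset.univ := by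
    intro idx
    have h := hLsub (L.orderIsoOfFin hLcard idx).2
    exact Finset.mem_sdiff.mp h
  have hcases := embFun_cases n m N x0 sv pv lv
  have hinj : Function.Injective (embFun n m N x0 sv pv lv) := by
    intro x y hxy
    rcases hcases x with ⟨hx, ex⟩ | ⟨ℓ, hx, ex⟩ | ⟨ℓ, hx, ex⟩ | ⟨ℓ, hx, ex⟩ <;>
      rcases hcases y with ⟨hy, ey⟩ | ⟨ℓ', hy, ey⟩ | ⟨ℓ', hy, ey⟩ | ⟨ℓ', hy, ey⟩ <;>
      rw [ex, ey] at hxy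
    · exact Fin.ext (by omega)
    · exact absurd (hxy ▸ hsvS ℓ') hx0S
    · exact absurd hxy.symm (hpvx ℓ')
    · exact absurd (hxy ▸ (hlvmem ℓ').1) hx0S
    · exact absurd (hxy.symm ▸ hsvS ℓ) hx0S
    · have := hsvInj hxy; exact Fin.ext (by omega)
    · exact absurd (hxy ▸ hsvS ℓ) (hpvS ℓ')
    · exact absurd (Finset.mem_image_of_mem sv (Finset.mem_univ ℓ)) (hxy ▸ (hlvmem ℓ').2)
    · exact absurd hxy (hpvx ℓ)
    · exact absurd (hxy.symm ▸ hsvS ℓ') (hpvS ℓ)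
    · have := hpvInj hxy; exact Fin.ext (by omega)
    · exact absurd ((hlvmem ℓ').1) (hxy ▸ hpvS ℓ)
    · exact absurd (hxy.symm ▸ (hlvmem ℓ).1) hx0S
    · exact absurd (Finset.mem_image_of_mem sv (Finset.mem_univ ℓ')) (hxy.symm ▸ (hlvmem ℓ).2)
    · exact absurd ((hlvmem ℓ).1) (hxy.symm ▸ hpvS ℓ')
    · have := hlvInj hxy; exact Fin.ext (by omega)
  have key : ∀ a b : Fin (n + m + 1),
      ((a.val = 0 ∧ 1 ≤ b.val ∧ b.val ≤ m) ∨
       (1 ≤ a.val ∧ a.val ≤ m ∧ b.val = a.val + m) ∨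
       (a.val = 0 ∧ 2 * m + 1 ≤ b.val)) →
      c s(embFun n m N x0 sv pv lv a, embFun n m N x0 sv pv lv b) = j := by
    intro a b hr
    rcases hcases a with ⟨ha, ea⟩ | ⟨ℓ, ha, ea⟩ | ⟨ℓ, ha, ea⟩ | ⟨ℓ, ha, ea⟩ <;>
      rcases hcases b with ⟨hb, eb⟩ | ⟨ℓ', hb, eb⟩ | ⟨ℓ', hb, eb⟩ | ⟨ℓ', hb, eb⟩ <;>
      rcases hr with ⟨h1, h2, h3⟩ | ⟨h1, h2, h3⟩ | ⟨h1, h2⟩ <;>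
      rw [ea, eb] <;>
      first
      | omega
      | (exact hSc _ (hsvS ℓ'))
      | (exact hSc _ (hlvmem ℓ').1)
      | (have hℓ : ℓ' = ℓ := Fin.ext (by omega); rw [hℓ]; exact hc ℓ)
  refine ⟨⟨embFun n m N x0 sv pv lv, hinj⟩, j, ?_⟩
  intro v w hadj
  rw [subdividedStar, SimpleGraph.fromRel_adj] at hadj
  obtain ⟨hne, h | h⟩ := hadj
  · exact key v w h
  · rw [Sym2.eq_swap]; exact key w v h


/-- Let `k ≥ 2`, `n ≥ 2`, `n ≥ m ≥ 1` and `t = ⌈(n−m+1)/(k−1)⌉`. If `t > m`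
and `nt > (t−m)(m−1)t + m((n−1)(k−1) + m)`, then `r(S_n^m; k) ≤ k(n−1) + m + 2`. -/
theorem stmt_13 (n m k t : ℕ) (hk : 2 ≤ k) (hn : 2 ≤ n) (hnm : m ≤ n) (hm : 1 ≤ m)
    (ht : t = (n - m + 1) ⌈/⌉ (k - 1)) (htm : t > m)
    (hineq : n * t > (t - m) * (m - 1) * t + m * ((n - 1) * (k - 1) + m)) :
    ramseyNumber (subdividedStar n m) k ≤ k * (n - 1) + m + 2 := by
  classical
  obtain ⟨K, rfl⟩ : ∃ K, k = K + 1 := ⟨k - 1, by omega⟩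
  obtain ⟨a, rfl⟩ : ∃ a, n = a + 1 := ⟨n - 1, by omega⟩
  have hK : 1 ≤ K := by omega
  have ha : 1 ≤ a := by omega
  simp only [Nat.add_sub_cancel] at ht hineq ⊢
  apply Nat.sInf_le
  show IsRamsey (subdividedStar (a + 1) m) (K + 1) ((K + 1) * a + m + 2)
  set N := (K + 1) * a + m + 2 with hNdef
  intro c
  by_contra hno
  have hNval : N = K * a + a + m + 2 := by rw [hNdef]; ring
  have hN0 : 0 < N := by omega
  set v0 : Fin N := ⟨0, hN0⟩ with hv0
  -- Step 1 : a colour with many neighbours at v0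
  have hv0sum : ∑ i : Fin (K + 1),
      ((Finset.univ.erase v0).filter (fun w => c s(v0, w) = i)).card = N - 1 := by
    have h1 := Finset.card_eq_sum_card_fiberwise
      (s := Finset.univ.erase v0) (t := (Finset.univ : Finset (Fin (K + 1))))
      (f := fun w => c s(v0, w)) (fun x _ => Finset.mem_univ _)
    rw [← h1, Finset.card_erase_of_mem (Finset.mem_univ v0), Finset.card_univ,
      Fintype.card_fin]
  obtain ⟨i1, hi1⟩ : ∃ i : Fin (K + 1),
      a + 1 ≤ ((Finset.univ.erase v0).filter (fun w => c s(v0, w) = i)).card := by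
    by_contra hcon
    push_neg at hcon
    have hle : ∑ i : Fin (K + 1),
        ((Finset.univ.erase v0).filter (fun w => c s(v0, w) = i)).card ≤
        (Finset.univ : Finset (Fin (K + 1))).card • a :=
      Finset.sum_le_card_nsmul _ _ _ (fun i _ => by have := hcon i; omega)
    rw [hv0sum, Finset.card_univ, Fintype.card_fin, smul_eq_mul] at hle
    omega
  obtain ⟨A, hAsub, hAcard⟩ := Finset.exists_subset_card_eq hi1
  have hAv0 : ∀ w ∈ A, w ≠ v0 ∧ c s(v0, w) = i1 := by
    intro w hw
    have h := hAsub hw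
    simp only [Finset.mem_filter, Finset.mem_erase] at h
    exact ⟨h.1.1, h.2⟩
  have hv0A : v0 ∉ A := fun hv => (hAv0 v0 hv).1 rfl
  set B : Finset (Fin N) := (Finset.univ.erase v0) \ A with hBdef
  have hBmem : ∀ w : Fin N, w ∈ B ↔ (w ≠ v0 ∧ w ∉ A) := by
    intro w
    rw [hBdef]
    simp [Finset.mem_sdiff, Finset.mem_erase]
  have hBcard : B.card = K * a + m := by
    rw [hBdef, Finset.card_sdiff_of_subset (hAsub.trans (Finset.filter_subset _ _)),
      Finset.card_erase_of_mem (Finset.mem_univ v0), Finset.card_univ, Fintype.card_fin,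
      hAcard]
    omega
  -- Step 2 : few vertices of A have many colour-i1 edges to B
  set Astar := A.filter (fun u => m ≤ (B.filter (fun w => c s(u, w) = i1)).card)
    with hAstarDef
  have hAstarcard : Astar.card ≤ m - 1 := by
    by_contra hcon
    obtain ⟨U, hUsub, hUcard⟩ : ∃ U ⊆ Astar, U.card = m :=
      Finset.exists_subset_card_eq (by omega)
    obtain ⟨sv, hsvInj, hsvMem⟩ := enumHelper U hUcard
    have hsvA : ∀ ℓ, sv ℓ ∈ A := by
      intro ℓ
      have h := hUsub (hsvMem ℓ)
      rw [hAstarDef] at h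
      exact (Finset.mem_filter.mp h).1
    have hP : ∀ ℓ : Fin m, m ≤ ((B.filter (fun w => c s(sv ℓ, w) = i1))).card := by
      intro ℓ
      have h := hUsub (hsvMem ℓ)
      rw [hAstarDef] at h
      exact (Finset.mem_filter.mp h).2
    obtain ⟨pv, hpvInj, hpvMem⟩ := hallEasy _ hP
    have hpvB : ∀ ℓ, pv ℓ ∈ B := fun ℓ => (Finset.mem_filter.mp (hpvMem ℓ)).1
    exact hno (emb hm hnm c i1 v0 A hAcard hv0A (fun w hw => (hAv0 w hw).2)
      sv pv hsvInj hpvInj hsvA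
      (fun ℓ => ((hBmem (pv ℓ)).mp (hpvB ℓ)).2)
      (fun ℓ => ((hBmem (pv ℓ)).mp (hpvB ℓ)).1)
      (fun ℓ => (Finset.mem_filter.mp (hpvMem ℓ)).2))
  set A2 := A \ Astar with hA2Def
  have hA2sub : ∀ u ∈ A2, u ∈ A ∧ u ∉ Astar := by
    intro u hu
    rw [hA2Def] at hu
    exact Finset.mem_sdiff.mp hu
  have hA2card : a + 1 - m + 1 ≤ A2.card := by
    have hsub : Astar ⊆ A := by rw [hAstarDef]; exact Finset.filter_subset _ _
    rw [hA2Def, Finset.card_sdiff_of_subset hsub, hAcard]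
    omega
  have hstep2 : ∀ u ∈ A2, ∃ jj : Fin (K + 1), jj ≠ i1 ∧
      a + 1 ≤ (B.filter (fun w => c s(u, w) = jj)).card := by
    intro u hu
    have hunotstar : ¬ m ≤ (B.filter (fun w => c s(u, w) = i1)).card := by
      intro hcon
      exact (hA2sub u hu).2 (by rw [hAstarDef]; exact Finset.mem_filter.mpr ⟨(hA2sub u hu).1, hcon⟩)
    by_contra hcon
    push_neg at hcon
    have hBsum : ∑ jj : Fin (K + 1), (B.filter (fun w => c s(u, w) = jj)).card = B.card :=
      (Finset.card_eq_sum_card_fiberwise (fun x _ => Finset.mem_univ _)).symm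
    have hsplit : (B.filter (fun w => c s(u, w) = i1)).card +
        ∑ jj ∈ Finset.univ.erase i1, (B.filter (fun w => c s(u, w) = jj)).card = B.card := by
      rw [← hBsum]
      exact Finset.add_sum_erase Finset.univ
        (fun jj => (B.filter (fun w => c s(u, w) = jj)).card) (Finset.mem_univ i1)
    have hrest : ∑ jj ∈ Finset.univ.erase i1, (B.filter (fun w => c s(u, w) = jj)).card ≤
        (Finset.univ.erase i1).card • a :=
      Finset.sum_le_card_nsmul _ _ _
        (fun jj hjj => by have := hcon jj (Finset.mem_erase.mp hjj).1; omega)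
    rw [Finset.card_erase_of_mem (Finset.mem_univ i1), Finset.card_univ, Fintype.card_fin,
      smul_eq_mul, Nat.add_sub_cancel] at hrest
    omega
  have hchoice : ∀ u : Fin N, ∃ jj : Fin (K + 1), u ∈ A2 →
      (jj ≠ i1 ∧ a + 1 ≤ (B.filter (fun w => c s(u, w) = jj)).card) := by
    intro u
    by_cases hu : u ∈ A2
    · obtain ⟨jj, h1, h2⟩ := hstep2 u hu
      exact ⟨jj, fun _ => ⟨h1, h2⟩⟩
    · exact ⟨i1, fun h => absurd h hu⟩
  choose jf hjf using hchoice
  obtain ⟨j2, hj2⟩ : ∃ jj : Fin (K + 1), t ≤ (A2.filter (fun u => jf u = jj)).card := by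
    by_contra hcon
    push_neg at hcon
    have hfibsum : ∑ jj : Fin (K + 1), (A2.filter (fun u => jf u = jj)).card = A2.card :=
      (Finset.card_eq_sum_card_fiberwise (fun x _ => Finset.mem_univ _)).symm
    have hsplit : (A2.filter (fun u => jf u = i1)).card +
        ∑ jj ∈ Finset.univ.erase i1, (A2.filter (fun u => jf u = jj)).card = A2.card := by
      rw [← hfibsum]
      exact Finset.add_sum_erase Finset.univ
        (fun jj => (A2.filter (fun u => jf u = jj)).card) (Finset.mem_univ i1)
    have hi1fib : (A2.filter (fun u => jf u = i1)).card = 0 := by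
      rw [Finset.card_eq_zero, Finset.filter_eq_empty_iff]
      exact fun u hu => (hjf u hu).1
    have hrest : ∑ jj ∈ Finset.univ.erase i1, (A2.filter (fun u => jf u = jj)).card ≤
        (Finset.univ.erase i1).card • (t - 1) :=
      Finset.sum_le_card_nsmul _ _ _ (fun jj _ => by have := hcon jj; omega)
    rw [Finset.card_erase_of_mem (Finset.mem_univ i1), Finset.card_univ, Fintype.card_fin,
      smul_eq_mul, Nat.add_sub_cancel] at hrest
    have hceil : a + 1 - m + 1 ≤ K * (t - 1) := by omega
    have hfin := (ceilDiv_le_iff_le_mul (show 0 < K by omega)).mpr hceil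
    omega
  obtain ⟨T, hTsub, hTcard⟩ := Finset.exists_subset_card_eq hj2
  obtain ⟨uf, hufInj, hufMem⟩ := enumHelper T hTcard
  have hufA2 : ∀ i : Fin t, uf i ∈ A2 ∧ jf (uf i) = j2 := fun i =>
    Finset.mem_filter.mp (hTsub (hufMem i))
  have hufA : ∀ i : Fin t, uf i ∈ A := fun i => (hA2sub _ (hufA2 i).1).1
  have hAiEx : ∀ i : Fin t, ∃ s : Finset (Fin N),
      s ⊆ B.filter (fun w => c s(uf i, w) = j2) ∧ s.card = a + 1 := by
    intro i
    have h2 := (hjf (uf i) (hufA2 i).1).2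
    rw [(hufA2 i).2] at h2
    exact Finset.exists_subset_card_eq h2
  choose Ai hAisub hAicard using hAiEx
  have hAiB : ∀ i, Ai i ⊆ B := fun i => (hAisub i).trans (Finset.filter_subset _ _)
  have hAic : ∀ i, ∀ w ∈ Ai i, c s(uf i, w) = j2 := fun i w hw =>
    (Finset.mem_filter.mp (hAisub i hw)).2
  set mlt : Fin N → ℕ := fun w => (Finset.univ.filter (fun i : Fin t => w ∈ Ai i)).card
    with hmltDef
  have hCC : ∀ i : Fin t, ((Ai i).filter (fun w => m + 1 ≤ mlt w)).card ≤ m - 1 := by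
    intro i
    by_contra hcon
    obtain ⟨W, hWsub, hWcard⟩ : ∃ W ⊆ (Ai i).filter (fun w => m + 1 ≤ mlt w), W.card = m :=
      Finset.exists_subset_card_eq (by omega)
    obtain ⟨wv, hwvInj, hwvMem⟩ := enumHelper W hWcard
    have hwvAi : ∀ ℓ, wv ℓ ∈ Ai i := fun ℓ =>
      (Finset.mem_filter.mp (hWsub (hwvMem ℓ))).1
    have hwvmlt : ∀ ℓ, m + 1 ≤ mlt (wv ℓ) := fun ℓ =>
      (Finset.mem_filter.mp (hWsub (hwvMem ℓ))).2
    have hC : ∀ ℓ : Fin m,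
        m ≤ ((Finset.univ.filter (fun i' : Fin t => wv ℓ ∈ Ai i')).erase i).card := by
      intro ℓ
      rw [Finset.card_erase_of_mem
        (show i ∈ Finset.univ.filter (fun i' : Fin t => wv ℓ ∈ Ai i') from
          Finset.mem_filter.mpr ⟨Finset.mem_univ _, hwvAi ℓ⟩)]
      have h := hwvmlt ℓ
      simp only [hmltDef] at h
      omega
    obtain ⟨pidx, hpidxInj, hpidxMem⟩ := hallEasy _ hC
    have hpidxne : ∀ ℓ, pidx ℓ ≠ i := fun ℓ => (Finset.mem_erase.mp (hpidxMem ℓ)).1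
    have hpidxAi : ∀ ℓ, wv ℓ ∈ Ai (pidx ℓ) := fun ℓ =>
      (Finset.mem_filter.mp (Finset.mem_of_mem_erase (hpidxMem ℓ))).2
    apply hno
    refine emb hm hnm c j2 (uf i) (Ai i) (hAicard i) ?_ (fun w hw => hAic i w hw)
      wv (fun ℓ => uf (pidx ℓ)) hwvInj (fun x y hxy => hpidxInj (hufInj hxy)) hwvAi ?_ ?_ ?_
    · intro hmem
      exact ((hBmem _).mp (hAiB i hmem)).2 (hufA i)
    · intro ℓ hmem
      exact ((hBmem _).mp (hAiB i hmem)).2 (hufA (pidx ℓ))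
    · intro ℓ h
      exact hpidxne ℓ (hufInj h)
    · intro ℓ
      rw [Sym2.eq_swap]
      exact hAic (pidx ℓ) _ (hpidxAi ℓ)
  -- final counting
  have htotal : ∑ i : Fin t, (Ai i).card = ∑ w ∈ B, mlt w := by
    have h1 : ∀ i : Fin t, (Ai i).card = ∑ w ∈ B, (if w ∈ Ai i then 1 else 0) := by
      intro i
      rw [← Finset.card_filter, Finset.filter_mem_eq_inter,
        Finset.inter_eq_right.mpr (hAiB i)]
    rw [Finset.sum_congr rfl (fun i _ => h1 i), Finset.sum_comm]
    refine Finset.sum_congr rfl (fun w _ => ?_)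
    simp only [hmltDef]
    rw [Finset.card_filter]
  have hleft : ∑ i : Fin t, (Ai i).card = t * (a + 1) := by
    rw [Finset.sum_congr rfl (fun i _ => hAicard i), Finset.sum_const, Finset.card_univ,
      Fintype.card_fin, smul_eq_mul]
  set Hi := B.filter (fun w => m + 1 ≤ mlt w) with hHiDef
  have hHisub : Hi ⊆ B := by rw [hHiDef]; exact Finset.filter_subset _ _
  have hsplitB : ∑ w ∈ B \ Hi, mlt w + ∑ w ∈ Hi, mlt w = ∑ w ∈ B, mlt w :=
    Finset.sum_sdiff hHisub
  have hlow : ∑ w ∈ B \ Hi, mlt w ≤ (K * a + m) * m := by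
    calc ∑ w ∈ B \ Hi, mlt w ≤ (B \ Hi).card • m := by
          refine Finset.sum_le_card_nsmul _ _ _ (fun w hw => ?_)
          have hw' := Finset.mem_sdiff.mp hw
          have hnothigh : ¬ (m + 1 ≤ mlt w) := fun hc =>
            hw'.2 (by rw [hHiDef]; exact Finset.mem_filter.mpr ⟨hw'.1, hc⟩)
          omega
      _ ≤ B.card * m := by
          rw [smul_eq_mul]
          exact Nat.mul_le_mul_right _ (Finset.card_le_card (Finset.sdiff_subset))
      _ = (K * a + m) * m := by rw [hBcard]
  have hhigh : ∑ w ∈ Hi, mlt w ≤ t * (m - 1) := by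
    have h1 : ∀ w ∈ Hi, mlt w = ∑ i : Fin t, (if w ∈ Ai i then 1 else 0) := by
      intro w _
      simp only [hmltDef]
      rw [Finset.card_filter]
    calc ∑ w ∈ Hi, mlt w = ∑ i : Fin t, ∑ w ∈ Hi, (if w ∈ Ai i then 1 else 0) := by
          rw [Finset.sum_congr rfl h1, Finset.sum_comm]
      _ ≤ ∑ _i : Fin t, (m - 1) := by
          refine Finset.sum_le_sum (fun i _ => ?_)
          have heq : Hi.filter (fun w => w ∈ Ai i) =
              (Ai i).filter (fun w => m + 1 ≤ mlt w) := by
            ext w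
            simp only [hHiDef, Finset.mem_filter]
            constructor
            · rintro ⟨⟨hwB, hwhigh⟩, hwAi⟩
              exact ⟨hwAi, hwhigh⟩
            · rintro ⟨hwAi, hwhigh⟩
              exact ⟨⟨hAiB i hwAi, hwhigh⟩, hwAi⟩
          calc ∑ w ∈ Hi, (if w ∈ Ai i then 1 else 0) =
              (Hi.filter (fun w => w ∈ Ai i)).card := (Finset.card_filter _ _).symm
            _ = ((Ai i).filter (fun w => m + 1 ≤ mlt w)).card := by rw [heq]
            _ ≤ m - 1 := hCC i
      _ = t * (m - 1) := by
          rw [Finset.sum_const, Finset.card_univ, Fintype.card_fin, smul_eq_mul]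
  have hfin : (a + 1) * t ≤ t * (m - 1) + (K * a + m) * m := by
    calc (a + 1) * t = t * (a + 1) := Nat.mul_comm _ _
      _ = ∑ w ∈ B, mlt w := by rw [← htotal, hleft]
      _ = ∑ w ∈ B \ Hi, mlt w + ∑ w ∈ Hi, mlt w := hsplitB.symm
      _ ≤ (K * a + m) * m + t * (m - 1) := Nat.add_le_add hlow hhigh
      _ = t * (m - 1) + (K * a + m) * m := Nat.add_comm _ _
  have hmono : t * (m - 1) ≤ (t - m) * (m - 1) * t := by
    calc t * (m - 1) = (m - 1) * t := Nat.mul_comm _ _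
      _ ≤ (t - m) * ((m - 1) * t) := Nat.le_mul_of_pos_left _ (by omega)
      _ = (t - m) * (m - 1) * t := (Nat.mul_assoc _ _ _).symm
  have hKa : (K * a + m) * m = m * (a * K + m) := by ring
  omega
end
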